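/- arXiv:1806.04831 — 8 statements merged into one kernel-verified Lean document; each statement's English description precedes it below -/
import Mathlib

section
/- If U is a codimension-k linear subspace of a linear subspace V of F_2^n, then there exists a linear projection ρ from V onto U (i.e., a linear map ρ : V → U with ρ(u) = u for all u ∈ U) such that the Hamming weight of ρ(v) is at most (k+1) times the Hamming weight of v, for every v ∈ V. -/
def perp {ι : Type} [Fintype ι] (W : Submodule (ZMod 2) (ι → ZMod 2)) :
    Submodule (ZMod 2) (ι → ZMod 2) where
  carrier := {x | ∀ w ∈ W, ∑ i, x i * w i = 0}
  add_mem' := by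
    intro a b ha hb w hw
    have h1 := ha w hw
    have h2 := hb w hw
    simp only [Set.mem_setOf_eq, Pi.add_apply, add_mul, Finset.sum_add_distrib, h1, h2, add_zero]
  zero_mem' := by intro w hw; simp
  smul_mem' := by
    intro c a ha w hw
    have h1 := ha w hw
    simp only [Set.mem_setOf_eq, Pi.smul_apply, smul_eq_mul, mul_assoc, ← Finset.mul_sum, h1,
      mul_zero]

noncomputable def minWt {ι : Type} [Fintype ι] (A : Set (ι → ZMod 2)) : ℕ :=
  sInf (hammingNorm '' A)

def evenSub (n : ℕ) : Submodule (ZMod 2) (Fin n → ZMod 2) where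
  carrier := {x | ∑ i, x i = 0}
  add_mem' := by
    intro a b ha hb
    simp only [Set.mem_setOf_eq, Pi.add_apply, Finset.sum_add_distrib] at *
    simp [ha, hb]
  zero_mem' := by simp
  smul_mem' := by
    intro c a ha
    simp only [Set.mem_setOf_eq, Pi.smul_apply, smul_eq_mul, ← Finset.mul_sum] at *
    simp [ha]



lemma myAddSelf {n : ℕ} (a : Fin n → ZMod 2) : a + a = 0 := by
  funext i; exact CharTwo.add_self_eq_zero (a i)

lemma myHnAddLe {n : ℕ} (a b : Fin n → ZMod 2) :
    hammingNorm (a + b) ≤ hammingNorm a + hammingNorm b := by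
  calc hammingNorm (a + b) = hammingDist (a + b) 0 := (hammingDist_zero_right _).symm
  _ ≤ hammingDist (a + b) b + hammingDist b 0 := hammingDist_triangle _ _ _
  _ = hammingNorm a + hammingNorm b := by
      rw [hammingDist_eq_hammingNorm, hammingDist_zero_right, neg_add, neg_add_cancel_right,
        neg_eq_of_add_eq_zero_left (myAddSelf a)]

lemma projAux {n : ℕ} (k : ℕ) (U V : Submodule (ZMod 2) (Fin n → ZMod 2))
    (hUV : U ≤ V)
    (hcodim : Module.finrank (ZMod 2) ↥V = Module.finrank (ZMod 2) ↥U + k) :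
    ∃ ρ : ↥V →ₗ[ZMod 2] ↥U,
      (∀ v : ↥V, (v : Fin n → ZMod 2) ∈ U → (ρ v : Fin n → ZMod 2) = v) ∧
      ∀ v : ↥V, hammingNorm ((ρ v : Fin n → ZMod 2) + (v : Fin n → ZMod 2)) ≤
        k * hammingNorm (v : Fin n → ZMod 2) := by
  classical
  induction k generalizing U with
  | zero =>
      have hVU : V ≤ U := le_of_eq (Submodule.eq_of_le_of_finrank_eq hUV (by omega)).symm
      refine ⟨Submodule.inclusion hVU, fun v _ => rfl, fun v => ?_⟩
      have h : ((Submodule.inclusion hVU v : ↥U) : Fin n → ZMod 2) = (v : Fin n → ZMod 2) := rfl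
      rw [h, myAddSelf]
      simp
  | succ k ih =>
      have htwo : ∀ c : ZMod 2, c ≠ 0 → c = 1 := by decide
      have hne : U ≠ V := by
        intro h; rw [h] at hcodim; omega
      obtain ⟨w0, hw0V, hw0U⟩ : ∃ x, x ∈ V ∧ x ∉ U := by
        by_contra h; push_neg at h
        exact hne (le_antisymm hUV h)
      set S : Set (Fin n → ZMod 2) := {x | x ∈ V ∧ x ∉ U} with hSdef
      have hS : S.Nonempty := ⟨w0, hw0V, hw0U⟩
      obtain ⟨w, hwS, hwinf⟩ : ∃ w ∈ S, hammingNorm w = sInf (hammingNorm '' S) := by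
        obtain ⟨w, hw, he⟩ := Nat.sInf_mem (hS.image hammingNorm)
        exact ⟨w, hw, he⟩
      have hmin : ∀ x ∈ S, hammingNorm w ≤ hammingNorm x := fun x hx =>
        hwinf ▸ Nat.sInf_le ⟨x, hx, rfl⟩
      obtain ⟨hwV, hwU⟩ := hwS
      have hw0 : w ≠ 0 := fun h => hwU (h ▸ U.zero_mem)
      set W := U ⊔ (ZMod 2) ∙ w with hWdef
      have hUW : U ≤ W := le_sup_left
      have hWV : W ≤ V := sup_le hUV ((Submodule.span_singleton_le_iff_mem w V).2 hwV)
      have hinf : U ⊓ ((ZMod 2) ∙ w) = ⊥ := by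
        rw [eq_bot_iff]
        rintro x ⟨hxU, hxs⟩
        obtain ⟨c, rfl⟩ := Submodule.mem_span_singleton.1 hxs
        rcases eq_or_ne c 0 with rfl | hc
        · simp
        · rw [htwo c hc, one_smul] at hxU
          exact absurd hxU hwU
      have hrW : Module.finrank (ZMod 2) ↥W = Module.finrank (ZMod 2) ↥U + 1 := by
        have h := Submodule.finrank_sup_add_finrank_inf_eq U ((ZMod 2) ∙ w)
        rw [hinf, finrank_bot, finrank_span_singleton hw0, ← hWdef] at h
        omega
      obtain ⟨ρ', hid', hbd'⟩ := ih W hWV (by omega)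
      have hkey : ∀ x ∈ W, x ∉ U → x + w ∈ U := by
        intro x hxW hxU
        obtain ⟨u, huU, z, hz, rfl⟩ := Submodule.mem_sup.1 hxW
        obtain ⟨c, rfl⟩ := Submodule.mem_span_singleton.1 hz
        rcases eq_or_ne c 0 with rfl | hc
        · rw [zero_smul, add_zero] at hxU
          exact absurd huU hxU
        · rw [htwo c hc, one_smul, add_assoc, myAddSelf, add_zero]
          exact huU
      have haddmem : ∀ a b : Fin n → ZMod 2, a ∈ U → ((a + b) ∈ U ↔ b ∈ U) := by
        intro a b ha
        constructor
        · intro h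
          have h2 := U.add_mem h ha
          rwa [show a + b + a = b + (a + a) by ring, myAddSelf, add_zero] at h2
        · intro h; exact U.add_mem ha h
      let πf : ↥W → ↥U := fun x =>
        if h : (x : Fin n → ZMod 2) ∈ U then ⟨x, h⟩
        else ⟨(x : Fin n → ZMod 2) + w, hkey x x.2 h⟩
      have πf_coe : ∀ x : ↥W, ((πf x : Fin n → ZMod 2) =
          if (x : Fin n → ZMod 2) ∈ U then (x : Fin n → ZMod 2)
          else (x : Fin n → ZMod 2) + w) := by
        intro x
        by_cases h : (x : Fin n → ZMod 2) ∈ U <;> simp [πf, h]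
      have hadd : ∀ x y : ↥W, πf (x + y) = πf x + πf y := by
        intro x y
        apply Subtype.ext
        rw [Submodule.coe_add, πf_coe, πf_coe, πf_coe, Submodule.coe_add]
        by_cases hx : (x : Fin n → ZMod 2) ∈ U <;>
          by_cases hy : (y : Fin n → ZMod 2) ∈ U
        · rw [if_pos hx, if_pos hy, if_pos (U.add_mem hx hy)]
        · rw [if_pos hx, if_neg hy, if_neg (fun h => hy ((haddmem _ _ hx).1 h))]
          ring
        · rw [if_neg hx, if_pos hy,
            if_neg (fun h => hx ((haddmem _ _ hy).1 (by rwa [add_comm] at h)))]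
          ring
        · have hxy : (x : Fin n → ZMod 2) + (y : Fin n → ZMod 2) ∈ U := by
            have h2 := U.add_mem (hkey x x.2 hx) (hkey y y.2 hy)
            rwa [show ((x : Fin n → ZMod 2) + w) + ((y : Fin n → ZMod 2) + w)
              = ((x : Fin n → ZMod 2) + (y : Fin n → ZMod 2)) + (w + w) by ring,
              myAddSelf, add_zero] at h2
          rw [if_pos hxy, if_neg hx, if_neg hy,
            show ((x : Fin n → ZMod 2) + w) + ((y : Fin n → ZMod 2) + w)
              = ((x : Fin n → ZMod 2) + (y : Fin n → ZMod 2)) + (w + w) by ring,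
            myAddSelf, add_zero]
      have hsmul : ∀ (c : ZMod 2) (x : ↥W), πf (c • x) = c • πf x := by
        intro c x
        rcases eq_or_ne c 0 with rfl | hc
        · rw [zero_smul, zero_smul]
          apply Subtype.ext
          rw [πf_coe]
          simp
        · rw [htwo c hc, one_smul, one_smul]
      let π : ↥W →ₗ[ZMod 2] ↥U :=
        { toFun := πf, map_add' := hadd, map_smul' := hsmul }
      have π_coe : ∀ x : ↥W, ((π x : Fin n → ZMod 2) =
          if (x : Fin n → ZMod 2) ∈ U then (x : Fin n → ZMod 2)
          else (x : Fin n → ZMod 2) + w) := πf_coe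
      refine ⟨π.comp ρ', ?_, ?_⟩
      · intro v hv
        have h1 : (ρ' v : Fin n → ZMod 2) = v := hid' v (hUW hv)
        rw [LinearMap.comp_apply, π_coe, h1, if_pos hv]
      · intro v
        rw [LinearMap.comp_apply, π_coe]
        by_cases hx : (ρ' v : Fin n → ZMod 2) ∈ U
        · rw [if_pos hx]
          calc hammingNorm ((ρ' v : Fin n → ZMod 2) + (v : Fin n → ZMod 2))
              ≤ k * hammingNorm (v : Fin n → ZMod 2) := hbd' v
            _ ≤ (k + 1) * hammingNorm (v : Fin n → ZMod 2) :=
                Nat.mul_le_mul_right _ (by omega)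
        · rw [if_neg hx]
          have hvU : (v : Fin n → ZMod 2) ∉ U := fun h => hx (by rw [hid' v (hUW h)]; exact h)
          have hwle : hammingNorm w ≤ hammingNorm (v : Fin n → ZMod 2) :=
            hmin _ ⟨v.2, hvU⟩
          calc hammingNorm (((ρ' v : Fin n → ZMod 2) + w) + (v : Fin n → ZMod 2))
              = hammingNorm (((ρ' v : Fin n → ZMod 2) + (v : Fin n → ZMod 2)) + w) := by ring_nf
            _ ≤ hammingNorm ((ρ' v : Fin n → ZMod 2) + (v : Fin n → ZMod 2)) + hammingNorm w := myHnAddLe _ _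
            _ ≤ k * hammingNorm (v : Fin n → ZMod 2)
                + hammingNorm (v : Fin n → ZMod 2) := add_le_add (hbd' v) hwle
            _ = (k + 1) * hammingNorm (v : Fin n → ZMod 2) := by ring


theorem stmt0 (n k : ℕ) (U V : Submodule (ZMod 2) (Fin n → ZMod 2))
    (hUV : U ≤ V)
    (hcodim : Module.finrank (ZMod 2) ↥V = Module.finrank (ZMod 2) ↥U + k) :
    ∃ ρ : ↥V →ₗ[ZMod 2] ↥U,
      (∀ (x : Fin n → ZMod 2) (hx : x ∈ U), (ρ ⟨x, hUV hx⟩ : Fin n → ZMod 2) = x) ∧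
      ∀ v : ↥V, hammingNorm ((ρ v : Fin n → ZMod 2)) ≤ (k + 1) * hammingNorm (v : Fin n → ZMod 2) := by
  obtain ⟨ρ, hid, hbd⟩ := projAux k U V hUV hcodim
  refine ⟨ρ, fun x hx => hid ⟨x, hUV hx⟩ hx, fun v => ?_⟩
  have h1 : (ρ v : Fin n → ZMod 2) = ((ρ v : Fin n → ZMod 2) + (v : Fin n → ZMod 2)) + (v : Fin n → ZMod 2) := by
    rw [add_assoc, myAddSelf, add_zero]
  calc hammingNorm (ρ v : Fin n → ZMod 2)
      = hammingNorm (((ρ v : Fin n → ZMod 2) + (v : Fin n → ZMod 2)) + (v : Fin n → ZMod 2)) := by rw [← h1]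
    _ ≤ hammingNorm ((ρ v : Fin n → ZMod 2) + (v : Fin n → ZMod 2))
        + hammingNorm (v : Fin n → ZMod 2) := myHnAddLe _ _
    _ ≤ k * hammingNorm (v : Fin n → ZMod 2)
        + hammingNorm (v : Fin n → ZMod 2) := Nat.add_le_add_right (hbd v) _
    _ = (k + 1) * hammingNorm (v : Fin n → ZMod 2) := by ring
end

section
/- Let U ⊂ V be linear subspaces of F_2^n with U of codimension 1 in V, and let S be a subspace contained in U. Then there exists a subspace T ⊆ V such that S has codimension 1 in T, T ∩ U = S, T + U = V, and min{|x| : x ∈ S^⊥ \ T^⊥} ≥ (1/(dim(U) − dim(S) + 1)) · min{|y| : y ∈ U^⊥ \ V^⊥}. -/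
set_option synthInstance.maxHeartbeats 1000000
set_option maxHeartbeats 1000000

open Module

variable {n : ℕ}

noncomputable def dotB (n : ℕ) : LinearMap.BilinForm (ZMod 2) (Fin n → ZMod 2) :=
  LinearMap.mk₂ (ZMod 2) (fun x y => ∑ i, x i * y i)
    (by intros; simp [add_mul, Finset.sum_add_distrib])
    (by intros; simp [Finset.mul_sum, mul_assoc])
    (by intros; simp [mul_add, Finset.sum_add_distrib])
    (by intros; simp [Finset.mul_sum]; ring_nf; simp [mul_comm, mul_left_comm])

lemma dotB_apply (x y : Fin n → ZMod 2) : dotB n x y = ∑ i, x i * y i := rfl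

lemma dotB_symm : (dotB n).IsSymm := by
  rw [LinearMap.BilinForm.isSymm_def]
  intro x y; simp [dotB_apply, mul_comm]

lemma dotB_nondeg : (dotB n).Nondegenerate := by
  have hL : ∀ x : Fin n → ZMod 2, (∀ y, dotB n x y = 0) → x = 0 := by
    intro x h
    funext i
    have := h (Pi.single i 1)
    simp [dotB_apply, Pi.single_apply, mul_ite] at this
    simpa using this
  refine ⟨hL, fun y h => hL y (fun x => ?_)⟩
  rw [LinearMap.BilinForm.isSymm_def.1 dotB_symm]
  exact h x

lemma perp_eq (W : Submodule (ZMod 2) (Fin n → ZMod 2)) :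
    perp W = (dotB n).orthogonal W := by
  ext x
  constructor
  · intro hx w hw
    have := hx w hw
    simp only [LinearMap.BilinForm.IsOrtho, dotB_apply]
    rw [Finset.sum_congr rfl (fun i _ => mul_comm (w i) (x i))]
    exact this
  · intro hx w hw
    have := hx w hw
    simp only [LinearMap.BilinForm.IsOrtho, dotB_apply] at this
    rw [Finset.sum_congr rfl (fun i _ => mul_comm (x i) (w i))]
    exact this

lemma mem_perp {W : Submodule (ZMod 2) (Fin n → ZMod 2)} {x : Fin n → ZMod 2} :
    x ∈ perp W ↔ ∀ w ∈ W, ∑ i, x i * w i = 0 := Iff.rfl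

lemma perp_perp (W : Submodule (ZMod 2) (Fin n → ZMod 2)) : perp (perp W) = W := by
  rw [perp_eq, perp_eq]
  exact LinearMap.BilinForm.orthogonal_orthogonal dotB_nondeg dotB_symm.isRefl W

lemma finrank_perp (W : Submodule (ZMod 2) (Fin n → ZMod 2)) :
    finrank (ZMod 2) (perp W) = n - finrank (ZMod 2) W := by
  rw [perp_eq]
  have := LinearMap.BilinForm.finrank_orthogonal dotB_nondeg W
  rwa [Module.finrank_pi, Fintype.card_fin] at this

lemma perp_antitone {W₁ W₂ : Submodule (ZMod 2) (Fin n → ZMod 2)} (h : W₁ ≤ W₂) :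
    perp W₂ ≤ perp W₁ := fun _ hx w hw => hx w (h hw)

lemma finrank_le_n (W : Submodule (ZMod 2) (Fin n → ZMod 2)) :
    finrank (ZMod 2) W ≤ n := by
  have := Submodule.finrank_le W
  rwa [Module.finrank_pi, Fintype.card_fin] at this

lemma perp_strict {W₁ W₂ : Submodule (ZMod 2) (Fin n → ZMod 2)} (h : W₁ < W₂) :
    perp W₂ < perp W₁ := by
  refine lt_of_le_of_ne (perp_antitone h.le) (fun he => ?_)
  have h1 : finrank (ZMod 2) W₁ < finrank (ZMod 2) W₂ :=
    Submodule.finrank_lt_finrank_of_lt h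
  have h2 := finrank_le_n W₂
  have h3 : finrank (ZMod 2) (perp W₂) = finrank (ZMod 2) (perp W₁) := by rw [he]
  rw [finrank_perp, finrank_perp] at h3
  omega

lemma perp_sup (A B : Submodule (ZMod 2) (Fin n → ZMod 2)) :
    perp (A ⊔ B) = perp A ⊓ perp B := by
  apply le_antisymm
  · exact le_inf (perp_antitone le_sup_left) (perp_antitone le_sup_right)
  · rintro x ⟨hxA, hxB⟩ w hw
    obtain ⟨a, ha, b, hb, rfl⟩ := Submodule.mem_sup.1 hw
    have h1 := hxA a ha
    have h2 := hxB b hb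
    simp only [Pi.add_apply, mul_add, Finset.sum_add_distrib, h1, h2, add_zero]

lemma hn_add_le (x y : Fin n → ZMod 2) :
    hammingNorm (x + y) ≤ hammingNorm x + hammingNorm y := by
  have key : ∀ i, (x i + y i ≠ 0 ↔ x i ≠ y i) := by
    intro i
    rw [not_iff_not, ← CharTwo.sub_eq_add, sub_eq_zero]
  have h1 : hammingNorm (x + y) = hammingDist x y := by
    unfold hammingNorm hammingDist
    congr 1
    ext i
    simp [key i]
  rw [h1]
  calc hammingDist x y ≤ hammingDist x 0 + hammingDist 0 y := hammingDist_triangle x 0 y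
    _ = hammingNorm x + hammingNorm y := by
        rw [hammingDist_zero_right, hammingDist_comm, hammingDist_zero_right]

lemma hn_sum_le {α : Type*} (t : Finset α) (f : α → Fin n → ZMod 2) :
    hammingNorm (∑ a ∈ t, f a) ≤ ∑ a ∈ t, hammingNorm (f a) := by
  induction t using Finset.cons_induction with
  | empty => simp
  | cons a t ha ih =>
    rw [Finset.sum_cons, Finset.sum_cons]
    exact le_trans (hn_add_le _ _) (by omega)

lemma sum_of_mem_span {m : Type*} [AddCommGroup m] [Module (ZMod 2) m]
    [Module.Finite (ZMod 2) m] (A : Set m) (x : m)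
    (hx : x ∈ Submodule.span (ZMod 2) A) :
    ∃ t : Finset m, ↑t ⊆ A ∧ t.card ≤ finrank (ZMod 2) (Submodule.span (ZMod 2) A) ∧
      x = ∑ y ∈ t, y := by
  classical
  obtain ⟨s, hsA, hspan, hind⟩ := exists_linearIndependent (ZMod 2) A
  haveI := hind.setFinite.fintype
  have hcard : s.toFinset.card = finrank (ZMod 2) (Submodule.span (ZMod 2) s) :=
    (finrank_span_set_eq_card hind).symm
  have hx' : x ∈ Submodule.span (ZMod 2) (s.toFinset : Set m) := by
    rwa [Set.coe_toFinset, hspan]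
  obtain ⟨f, -, hf⟩ := Submodule.mem_span_finset.1 hx'
  refine ⟨s.toFinset.filter (fun y => f y = 1), ?_, ?_, ?_⟩
  · intro y hy
    simp only [Finset.coe_filter, Set.mem_setOf_eq, Set.mem_toFinset] at hy
    exact hsA hy.1
  · calc (s.toFinset.filter (fun y => f y = 1)).card ≤ s.toFinset.card :=
          Finset.card_filter_le _ _
      _ = finrank (ZMod 2) (Submodule.span (ZMod 2) s) := hcard
      _ = finrank (ZMod 2) (Submodule.span (ZMod 2) A) := by rw [hspan]
  · rw [← hf, Finset.sum_filter]
    apply Finset.sum_congr rfl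
    intro y _
    rcases (show ∀ c : ZMod 2, c = 0 ∨ c = 1 from by decide) (f y) with h | h
    · simp [h]
    · simp [h]

theorem stmt3 (n : ℕ) (S U V : Submodule (ZMod 2) (Fin n → ZMod 2))
    (hUV : U ≤ V)
    (hcodim : Module.finrank (ZMod 2) ↥V = Module.finrank (ZMod 2) ↥U + 1)
    (hSU : S ≤ U) :
    ∃ T : Submodule (ZMod 2) (Fin n → ZMod 2), S ≤ T ∧ T ≤ V ∧
      Module.finrank (ZMod 2) ↥T = Module.finrank (ZMod 2) ↥S + 1 ∧
      T ⊓ U = S ∧ T ⊔ U = V ∧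
      minWt ((perp U : Set (Fin n → ZMod 2)) \ (perp V : Set (Fin n → ZMod 2))) ≤
        (Module.finrank (ZMod 2) ↥U - Module.finrank (ZMod 2) ↥S + 1) *
          minWt ((perp S : Set (Fin n → ZMod 2)) \ (perp T : Set (Fin n → ZMod 2))) := by
  classical
  set d := minWt ((perp U : Set (Fin n → ZMod 2)) \ (perp V : Set (Fin n → ZMod 2))) with hd
  set k := finrank (ZMod 2) U - finrank (ZMod 2) S with hk
  set G : Set (Fin n → ZMod 2) := {x | x ∈ perp S ∧ hammingNorm x * (k + 1) < d} with hG
  set L : Submodule (ZMod 2) (Fin n → ZMod 2) := Submodule.span (ZMod 2) G with hL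
  set M : Submodule (ZMod 2) (Fin n → ZMod 2) := L ⊔ perp V with hM
  have hSU' : finrank (ZMod 2) S ≤ finrank (ZMod 2) U := Submodule.finrank_mono hSU
  have hVn := finrank_le_n V
  have hGperpS : G ⊆ (perp S : Set _) := fun x hx => hx.1
  have hLperpS : L ≤ perp S := Submodule.span_le.2 hGperpS
  have hpVS : perp V ≤ perp S := perp_antitone (hSU.trans hUV)
  have hpVU : perp V ≤ perp U := perp_antitone hUV
  -- core claim : low-weight part of perp S meeting perp U lies in perp V
  have claim2 : ∀ l ∈ L, l ∈ perp U → l ∈ perp V := by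
    intro l hlL hlU
    set q := (perp V).mkQ with hq
    set P := Submodule.map q (perp S) with hP
    have hPrank : finrank (ZMod 2) P ≤ k + 1 := by
      have h1 := LinearMap.finrank_range_add_finrank_ker (q.domRestrict (perp S))
      rw [LinearMap.range_domRestrict] at h1
      have h2 : LinearMap.ker (q.domRestrict (perp S)) =
          Submodule.comap (perp S).subtype (perp V) := by
        rw [LinearMap.ker_domRestrict, hq, Submodule.ker_mkQ]
      have h3 : finrank (ZMod 2) (Submodule.comap (perp S).subtype (perp V)) =
          finrank (ZMod 2) (perp V) :=
        (Submodule.comapSubtypeEquivOfLe hpVS).finrank_eq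
      rw [h2, h3] at h1
      have h1' : finrank (ZMod 2) P + finrank (ZMod 2) (perp V) = finrank (ZMod 2) (perp S) :=
        h1
      clear h1
      have e1 : finrank (ZMod 2) (perp V) = n - finrank (ZMod 2) V := finrank_perp V
      have e2 : finrank (ZMod 2) (perp S) = n - finrank (ZMod 2) S := finrank_perp S
      have hSn := finrank_le_n S
      omega
    have hql : q l ∈ Submodule.span (ZMod 2) (q '' G) := by
      rw [← Submodule.map_span]
      exact Submodule.mem_map_of_mem hlL
    have hspanP : Submodule.span (ZMod 2) (q '' G) ≤ P := by
      rw [Submodule.span_le]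
      rintro y ⟨g, hg, rfl⟩
      exact Submodule.mem_map_of_mem (hGperpS hg)
    obtain ⟨t, htG, htcard, htsum⟩ := sum_of_mem_span (q '' G) (q l) hql
    have htcard' : t.card ≤ k + 1 :=
      le_trans (le_trans htcard (Submodule.finrank_mono hspanP)) hPrank
    have hchoice : ∀ y ∈ t, ∃ g, g ∈ G ∧ q g = y := by
      intro y hy
      obtain ⟨g, hg, he⟩ := htG hy
      exact ⟨g, hg, he⟩
    choose c hcG hcq using hchoice
    set w : Fin n → ZMod 2 := ∑ y ∈ t.attach, c y.1 y.2 with hw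
    have hqw : q w = q l := by
      rw [hw, map_sum, htsum]
      calc ∑ y ∈ t.attach, q (c y.1 y.2) = ∑ y ∈ t.attach, y.1 := by
            exact Finset.sum_congr rfl (fun y _ => hcq y.1 y.2)
        _ = ∑ y ∈ t, y := Finset.sum_attach t id
    have hlw : l - w ∈ perp V := by
      have : q (l - w) = 0 := by rw [map_sub, hqw, sub_self]
      rwa [hq, ← LinearMap.mem_ker, Submodule.ker_mkQ] at this
    have hwU : w ∈ perp U := by
      have : w = l - (l - w) := by abel
      rw [this]
      exact sub_mem hlU (hpVU hlw)
    have hwV : w ∈ perp V := by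
      rcases Finset.eq_empty_or_nonempty t with h0 | hne
      · subst h0
        have hw0 : w = 0 := by rw [hw]; simp
        rw [hw0]; exact zero_mem _
      · by_contra hwV
        have hle : d ≤ hammingNorm w := by
          apply Nat.sInf_le
          exact ⟨w, ⟨hwU, hwV⟩, rfl⟩
        have hsum : hammingNorm w ≤ ∑ y ∈ t.attach, hammingNorm (c y.1 y.2) :=
          hn_sum_le _ _
        have hlt : (∑ y ∈ t.attach, hammingNorm (c y.1 y.2)) * (k + 1) < (k + 1) * d := by
          rw [Finset.sum_mul]
          calc ∑ y ∈ t.attach, hammingNorm (c y.1 y.2) * (k + 1)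
              < ∑ _y ∈ t.attach, d := by
                apply Finset.sum_lt_sum_of_nonempty
                · exact Finset.attach_nonempty_iff.2 hne
                · intro y _
                  exact (hcG y.1 y.2).2
            _ = t.card * d := by rw [Finset.sum_const, Finset.card_attach, smul_eq_mul]
            _ ≤ (k + 1) * d := Nat.mul_le_mul_right d htcard'
        have hwd : hammingNorm w < d := by
          have h5 : hammingNorm w * (k + 1) < (k + 1) * d :=
            lt_of_le_of_lt (Nat.mul_le_mul_right _ hsum) hlt
          rw [mul_comm (k+1) d] at h5
          exact Nat.lt_of_mul_lt_mul_right h5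
        omega
    have : l = (l - w) + w := by abel
    rw [this]
    exact add_mem hlw hwV
  have key : M ⊓ perp U ≤ perp V := by
    rintro z ⟨hzM, hzU⟩
    obtain ⟨l, hlL, p, hp, rfl⟩ := Submodule.mem_sup.1 hzM
    have hlU : l ∈ perp U := by
      have : l = (l + p) - p := by abel
      rw [this]
      exact sub_mem hzU (hpVU hp)
    exact add_mem (claim2 l hlL hlU) hp
  have hUnotM : ¬ (perp U ≤ M) := by
    intro hle
    have h1 : perp U ≤ perp V := fun x hx => key ⟨hle hx, hx⟩
    have h2 := Submodule.finrank_mono h1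
    rw [finrank_perp, finrank_perp] at h2
    omega
  have hMlt : M < M ⊔ perp U := left_lt_sup.2 hUnotM
  obtain ⟨v, hvM, hvMU⟩ := SetLike.exists_of_lt (perp_strict hMlt)
  have hvV : v ∈ V := by
    have : v ∈ perp (perp V) := perp_antitone (le_sup_right : perp V ≤ M) hvM
    rwa [perp_perp] at this
  have hvU : v ∉ U := by
    intro hvU
    apply hvMU
    rw [perp_sup, perp_perp]
    exact ⟨hvM, hvU⟩
  have hvS : v ∉ S := fun h => hvU (hSU h)
  have hv0 : v ≠ 0 := fun h => hvS (h ▸ S.zero_mem)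
  set T := S ⊔ Submodule.span (ZMod 2) {v} with hT
  have hvT : v ∈ T := (le_sup_right : Submodule.span (ZMod 2) {v} ≤ T)
    (Submodule.mem_span_singleton_self v)
  have hST : S ≤ T := le_sup_left
  have hTV : T ≤ V := sup_le (hSU.trans hUV)
    ((Submodule.span_singleton_le_iff_mem v V).2 hvV)
  have hSinf : S ⊓ Submodule.span (ZMod 2) {v} = ⊥ := by
    rw [Submodule.eq_bot_iff]
    rintro x ⟨hxS, hxsp⟩
    obtain ⟨cc, rfl⟩ := Submodule.mem_span_singleton.1 hxsp
    by_cases hc : cc = 0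
    · simp [hc]
    · exfalso
      apply hvS
      have h6 := S.smul_mem cc⁻¹ hxS
      rwa [smul_smul, inv_mul_cancel₀ hc, one_smul] at h6
  have hTrank : finrank (ZMod 2) T = finrank (ZMod 2) S + 1 := by
    have h1 := Submodule.finrank_sup_add_finrank_inf_eq S (Submodule.span (ZMod 2) {v})
    rw [hSinf, finrank_bot, finrank_span_singleton hv0] at h1
    rw [hT]
    omega
  have hTU : T ⊓ U = S := by
    apply le_antisymm
    · rintro x ⟨hxT, hxU⟩
      obtain ⟨a, haS, b, hb, rfl⟩ := Submodule.mem_sup.1 hxT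
      obtain ⟨cc, rfl⟩ := Submodule.mem_span_singleton.1 hb
      by_cases hc : cc = 0
      · simpa [hc] using haS
      · exfalso
        apply hvU
        have hcvU : cc • v ∈ U := by
          have h7 : cc • v = (a + cc • v) - a := by abel
          rw [h7]
          exact sub_mem hxU (hSU haS)
        have h8 := U.smul_mem cc⁻¹ hcvU
        rwa [smul_smul, inv_mul_cancel₀ hc, one_smul] at h8
    · exact le_inf hST hSU
  have hTUV : T ⊔ U = V := by
    have hle : T ⊔ U ≤ V := sup_le hTV hUV
    have hlt : U < T ⊔ U := lt_of_le_of_ne le_sup_right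
      (fun he => hvU (he ▸ (le_sup_left : T ≤ T ⊔ U) hvT))
    have h9 := Submodule.finrank_lt_finrank_of_lt hlt
    exact Submodule.eq_of_le_of_finrank_le hle (by omega)
  refine ⟨T, hST, hTV, hTrank, hTU, hTUV, ?_⟩
  have hSTlt : S < T := lt_of_le_of_ne hST (fun he => hvS (he ▸ hvT))
  obtain ⟨x₁, hx₁S, hx₁T⟩ := SetLike.exists_of_lt (perp_strict hSTlt)
  have hAne : (hammingNorm '' ((perp S : Set (Fin n → ZMod 2)) \ (perp T))).Nonempty :=
    ⟨_, ⟨x₁, ⟨hx₁S, hx₁T⟩, rfl⟩⟩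
  obtain ⟨x₀, hx₀mem, hx₀⟩ := Nat.sInf_mem hAne
  by_contra hcon
  push_neg at hcon
  have hx₀small : x₀ ∈ G := by
    refine ⟨hx₀mem.1, ?_⟩
    have : hammingNorm x₀ = minWt ((perp S : Set (Fin n → ZMod 2)) \ (perp T)) := hx₀
    rw [this, mul_comm]
    exact hcon
  have hx₀M : x₀ ∈ M := (le_sup_left : L ≤ M) (Submodule.subset_span hx₀small)
  have hvx₀ : ∑ i, v i * x₀ i = 0 := hvM x₀ hx₀M
  apply hx₀mem.2
  show x₀ ∈ perp T
  rw [hT, perp_sup]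
  refine ⟨hx₀mem.1, ?_⟩
  intro ww hww
  obtain ⟨cc, rfl⟩ := Submodule.mem_span_singleton.1 hww
  have hx₀v : ∑ i, x₀ i * v i = 0 := by
    rw [Finset.sum_congr rfl (fun i _ => mul_comm (x₀ i) (v i))]
    exact hvx₀
  calc ∑ i, x₀ i * (cc • v) i = cc * ∑ i, x₀ i * v i := by
        rw [Finset.mul_sum]
        exact Finset.sum_congr rfl (fun i _ => by simp [smul_eq_mul]; ring)
    _ = 0 := by rw [hx₀v, mul_zero]
end

section
/- Let U ⊂ V be linear subspaces of F_2^n with U of codimension 1 in V, and suppose f : F_2^n → F_2 satisfies f(U) ≡ 0 and f(V \ U) ≡ 1, where f is computed by a DNF formula (an OR of clauses, each clause an AND of literals X_i or ¬X_i). Then the DNF has at least 2^{m−1} clauses, where m = min{|x| : x ∈ U^⊥ \ V^⊥}. -/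
def Formula (n : ℕ) : ℕ → Type
  | 0 => (Fin n × Bool) ⊕ Bool
  | d + 1 => Bool × {s : Set (Formula n d) // s.Nonempty}

def Formula.act {n : ℕ} (u : Fin n → ZMod 2) : {d : ℕ} → Formula n d → Formula n d
  | 0, Sum.inl (i, b) => Sum.inl (i, xor (u i == 1) b)
  | 0, Sum.inr b => Sum.inr b
  | _ + 1, (g, s) => (g, ⟨(fun G => Formula.act u G) '' s.1, s.2.image _⟩)

def Formula.Eval {n : ℕ} : {d : ℕ} → Formula n d → (Fin n → ZMod 2) → Prop
  | 0, Sum.inl (i, b), x => x i = (if b then 1 else 0)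
  | 0, Sum.inr b, _ => b = true
  | _ + 1, (g, s), x => if g then ∃ G ∈ s.1, Formula.Eval G x else ∀ G ∈ s.1, Formula.Eval G x

noncomputable def Formula.size {n : ℕ} : {d : ℕ} → Formula n d → ℕ
  | 0, _ => 0
  | 1, _ => 1
  | _ + 2, (_, s) => ∑ᶠ G ∈ s.1, Formula.size G

noncomputable def Formula.leafsize {n : ℕ} : {d : ℕ} → Formula n d → ℕ
  | 0, _ => 1
  | _ + 1, (_, s) => ∑ᶠ G ∈ s.1, Formula.leafsize G



open Module

open Module

lemma zmod2_ne (x : ZMod 2) (h : x ≠ 0) : x = 1 := by revert x; decide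

lemma zmod2_addself (x : ZMod 2) : x + x = 0 := by revert x; decide

lemma dualExists {ι : Type} [Fintype ι] [DecidableEq ι]
    (P : Submodule (ZMod 2) (ι → ZMod 2)) (v : ι → ZMod 2) (hv : v ∉ P) :
    ∃ w : ι → ZMod 2, (∀ u ∈ P, ∑ i, w i * u i = 0) ∧ (∑ i, w i * v i = 1) := by
  obtain ⟨f, hfv, hfP⟩ := Submodule.exists_dual_map_eq_bot_of_notMem hv inferInstance
  set w : ι → ZMod 2 := fun i => f (fun j => if i = j then 1 else 0) with hw
  have key : ∀ x : ι → ZMod 2, ∑ i, w i * x i = f x := by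
    intro x
    conv_rhs => rw [pi_eq_sum_univ x]
    rw [map_sum]
    exact Finset.sum_congr rfl fun i _ => by rw [map_smul, smul_eq_mul, mul_comm]
  refine ⟨w, fun u hu => ?_, ?_⟩
  · rw [key]
    have : f u ∈ P.map f := Submodule.mem_map_of_mem hu
    rwa [hfP, Submodule.mem_bot] at this
  · rw [key]; exact zmod2_ne _ hfv

lemma rank_nullity_restrict {M M' : Type} [AddCommGroup M] [Module (ZMod 2) M]
    [AddCommGroup M'] [Module (ZMod 2) M'] [FiniteDimensional (ZMod 2) M]
    (W : Submodule (ZMod 2) M) (g : M →ₗ[ZMod 2] M') :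
    finrank (ZMod 2) (W.map g) + finrank (ZMod 2) (W ⊓ LinearMap.ker g : Submodule (ZMod 2) M)
      = finrank (ZMod 2) W := by
  have h := LinearMap.finrank_range_add_finrank_ker (g.comp W.subtype)
  rw [LinearMap.range_comp, Submodule.range_subtype, LinearMap.ker_comp] at h
  rw [← h, ← Submodule.map_comap_subtype, Submodule.finrank_map_subtype_eq]

lemma infoSet {n : ℕ} (Q : Submodule (ZMod 2) (Fin n → ZMod 2)) :
    ∃ I : Finset (Fin n), I.card = finrank (ZMod 2) Q ∧
      (∀ x ∈ Q, (∀ i ∈ I, x i = 0) → x = 0) ∧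
      (∀ i ∈ I, ∃ q ∈ Q, q i ≠ 0) := by
  generalize hk : finrank (ZMod 2) Q = k
  induction k generalizing Q with
  | zero =>
    refine ⟨∅, rfl, fun x hx _ => ?_, by simp⟩
    rw [Submodule.finrank_eq_zero.mp hk] at hx
    simpa using hx
  | succ k ih =>
    have hQne : Q ≠ ⊥ := fun h => by rw [h] at hk; simp at hk
    obtain ⟨q, hqQ, hq0⟩ := Submodule.exists_mem_ne_zero_of_ne_bot hQne
    obtain ⟨i, hqi⟩ : ∃ i, q i ≠ 0 := by
      by_contra h; push_neg at h; exact hq0 (funext fun i => h i)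
    set Q' := Q ⊓ LinearMap.ker (LinearMap.proj i (φ := fun _ : Fin n => ZMod 2)) with hQ'
    have hrk : finrank (ZMod 2) Q' = k := by
      have h := rank_nullity_restrict Q (LinearMap.proj i (φ := fun _ : Fin n => ZMod 2))
      have hmap : finrank (ZMod 2) (Q.map (LinearMap.proj i (φ := fun _ : Fin n => ZMod 2))) = 1 := by
        have h1 : Q.map (LinearMap.proj i) ≠ ⊥ := by
          intro hb
          have : q i ∈ Q.map (LinearMap.proj i) := Submodule.mem_map_of_mem hqQ
          rw [hb, Submodule.mem_bot] at this
          exact hqi this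
        have h2 := Submodule.finrank_le (Q.map (LinearMap.proj i (φ := fun _ : Fin n => ZMod 2)))
        rw [finrank_self] at h2
        have h3 : finrank (ZMod 2) (Q.map (LinearMap.proj i (φ := fun _ : Fin n => ZMod 2))) ≠ 0 :=
          fun h0 => h1 (Submodule.finrank_eq_zero.mp h0)
        omega
      rw [hmap, hk] at h
      rw [hQ']
      omega
    obtain ⟨I', hI'card, hI'inj, hI'wit⟩ := ih Q' hrk
    have hiI' : i ∉ I' := by
      intro hi
      obtain ⟨q', hq', hq'i⟩ := hI'wit i hi
      have : q' i = 0 := hq'.2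
      exact hq'i this
    refine ⟨insert i I', ?_, ?_, ?_⟩
    · rw [Finset.card_insert_of_notMem hiI', hI'card]
    · intro x hx hxz
      have hxi : x i = 0 := hxz i (Finset.mem_insert_self i I')
      have hxQ' : x ∈ Q' := ⟨hx, hxi⟩
      exact hI'inj x hxQ' fun j hj => hxz j (Finset.mem_insert_of_mem hj)
    · intro j hj
      rcases Finset.mem_insert.mp hj with rfl | hj'
      · exact ⟨q, hqQ, hqi⟩
      · obtain ⟨q', hq', hq'j⟩ := hI'wit j hj'
        exact ⟨q', hq'.1, hq'j⟩


lemma pi_addself {n : ℕ} (x : Fin n → ZMod 2) : x + x = 0 :=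
  funext fun i => zmod2_addself (x i)

lemma submodule_ncard {n : ℕ} (W : Submodule (ZMod 2) (Fin n → ZMod 2)) :
    (W : Set (Fin n → ZMod 2)).ncard = 2 ^ finrank (ZMod 2) W := by
  classical
  rw [← Nat.card_coe_set_eq, Nat.card_eq_fintype_card]
  have h : Fintype.card W = Fintype.card (ZMod 2) ^ finrank (ZMod 2) W :=
    card_eq_pow_finrank
  rw [ZMod.card] at h
  rw [← h]
  exact Fintype.card_congr (Equiv.refl _)

lemma coset_ncard {n : ℕ} (W : Submodule (ZMod 2) (Fin n → ZMod 2)) (x0 : Fin n → ZMod 2) :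
    ((fun y => x0 + y) '' (W : Set (Fin n → ZMod 2))).ncard = 2 ^ finrank (ZMod 2) W := by
  rw [Set.ncard_image_of_injective _ (add_right_injective x0), submodule_ncard]

instance (n : ℕ) : Finite (Formula n 0) := inferInstanceAs (Finite ((Fin n × Bool) ⊕ Bool))
instance (n : ℕ) : Finite (Formula n 1) :=
  inferInstanceAs (Finite (Bool × {s : Set (Formula n 0) // s.Nonempty}))

lemma clause_bound {n : ℕ} (U V : Submodule (ZMod 2) (Fin n → ZMod 2)) (m : ℕ)
    (hUV : U ≤ V)
    (hm1 : 1 ≤ m)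
    (hmle : ∀ w', w' ∈ ((perp U : Set (Fin n → ZMod 2)) \ (perp V : Set (Fin n → ZMod 2))) →
      m ≤ hammingNorm w')
    (hcodim : finrank (ZMod 2) V = finrank (ZMod 2) U + 1)
    (hWU : ∀ a ∈ V, a ∉ U → ∀ b ∈ V, b ∉ U → a + b ∈ U)
    (SatC : Set (Fin n → ZMod 2))
    (T : Finset (Fin n)) (x0 : Fin n → ZMod 2)
    (hx0S : x0 ∈ SatC) (hx0V : x0 ∈ V) (hx0U : x0 ∉ U)
    (hchar : ∀ x, x ∈ SatC ↔ ∀ i ∈ T, x i = x0 i)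
    (hdisj : ∀ x ∈ U, x ∉ SatC) :
    2 ^ (m - 1) * (SatC ∩ ((V : Set (Fin n → ZMod 2)) \ (U : Set (Fin n → ZMod 2)))).ncard ≤
      2 ^ finrank (ZMod 2) U := by
  classical
  set π : (Fin n → ZMod 2) →ₗ[ZMod 2] (Fin n → ZMod 2) :=
    LinearMap.pi (fun i => if i ∈ T then (LinearMap.proj i) else 0) with hπdef
  have hπ : ∀ x i, π x i = if i ∈ T then x i else 0 := by
    intro x i
    simp only [hπdef, LinearMap.pi_apply]
    split <;> simp
  have hker : ∀ y, y ∈ LinearMap.ker π ↔ ∀ i ∈ T, y i = 0 := by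
    intro y
    rw [LinearMap.mem_ker, funext_iff]
    constructor
    · intro h i hi
      have := h i
      rwa [hπ, if_pos hi] at this
    · intro h i
      rw [hπ]
      split
      · exact h i ‹_›
      · rfl
  set WC := V ⊓ LinearMap.ker π with hWC
  have hstepA : WC ≤ U := by
    rintro y ⟨hyV, hyK⟩
    have hxyS : x0 + y ∈ SatC := by
      rw [hchar]
      intro i hi
      rw [Pi.add_apply, (hker y).mp hyK i hi, add_zero]
    have hxyV : x0 + y ∈ V := V.add_mem hx0V hyV
    have hxyU : x0 + y ∉ U := fun hU => hdisj _ hU hxyS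
    have h2 : x0 + (x0 + y) ∈ U := hWU x0 hx0V hx0U (x0 + y) hxyV hxyU
    rwa [← add_assoc, pi_addself, zero_add] at h2
  set Q := V.map π with hQ
  have hrank : finrank (ZMod 2) Q + finrank (ZMod 2) WC = finrank (ZMod 2) V :=
    rank_nullity_restrict V π
  obtain ⟨I, hIcard, hIinj, hIwit⟩ := infoSet Q
  have hIT : ∀ i ∈ I, i ∈ T := by
    intro i hi
    obtain ⟨q, hqQ, hqi⟩ := hIwit i hi
    obtain ⟨v, _, rfl⟩ := hqQ
    by_contra hiT
    rw [hπ, if_neg hiT] at hqi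
    exact hqi rfl
  -- the restriction map
  set ρ : (Fin n → ZMod 2) →ₗ[ZMod 2] (↥I → ZMod 2) :=
    LinearMap.pi (fun i : ↥I => LinearMap.proj (i : Fin n)) with hρdef
  have hρ : ∀ x (i : ↥I), ρ x i = x i := by intro x i; simp [hρdef]
  set Pim := U.map ρ with hPim
  have hp : ρ x0 ∉ Pim := by
    intro hmem
    obtain ⟨u, huU, hu⟩ := hmem
    have hux0 : π (u + x0) = 0 := by
      apply hIinj _ (Submodule.mem_map_of_mem (V.add_mem (hUV huU) hx0V))
      intro i hi
      rw [hπ, if_pos (hIT i hi), Pi.add_apply]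
      have : u i = x0 i := by
        have := congrFun hu ⟨i, hi⟩
        rwa [hρ, hρ] at this
      rw [this, zmod2_addself]
    have hWCU : u + x0 ∈ U := hstepA ⟨V.add_mem (hUV huU) hx0V, hux0⟩
    have : u + (u + x0) ∈ U := U.add_mem huU hWCU
    rw [← add_assoc, pi_addself, zero_add] at this
    exact hx0U this
  obtain ⟨a, haP, hap⟩ := dualExists Pim (ρ x0) hp
  set w' : Fin n → ZMod 2 := fun j => if h : j ∈ I then a ⟨j, h⟩ else 0 with hw'
  have hw'sum : ∀ x : Fin n → ZMod 2, ∑ j, w' j * x j = ∑ i : ↥I, a i * x i := by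
    intro x
    rw [← Finset.sum_subset I.subset_univ (fun j _ hj => by simp [hw', dif_neg hj])]
    rw [← Finset.sum_attach I (fun j => w' j * x j), ← Finset.univ_eq_attach]
    refine Finset.sum_congr rfl fun i _ => ?_
    simp [hw', dif_pos i.2]
  have hw'U : ∀ u ∈ U, ∑ j, w' j * u j = 0 := by
    intro u hu
    rw [hw'sum]
    have := haP (ρ u) (Submodule.mem_map_of_mem hu)
    convert this using 2 with i
    rw [hρ]
  have hw'x0 : ∑ j, w' j * x0 j = 1 := by
    rw [hw'sum]
    convert hap using 2 with i
    rw [hρ]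
  have hw'S0 : w' ∈ ((perp U : Set (Fin n → ZMod 2)) \ (perp V : Set (Fin n → ZMod 2))) := by
    constructor
    · exact hw'U
    · intro h
      have := h x0 hx0V
      rw [hw'x0] at this
      exact one_ne_zero this
  have hmI : m ≤ I.card := by
    have h1 := hmle w' hw'S0
    have h2 : hammingNorm w' ≤ I.card := by
      apply Finset.card_le_card
      intro j hj
      rw [Finset.mem_filter] at hj
      by_contra hjI
      exact hj.2 (by simp [hw', dif_neg hjI])
    omega
  rw [hIcard] at hmI
  -- card computation
  have hSet : SatC ∩ ((V : Set (Fin n → ZMod 2)) \ (U : Set (Fin n → ZMod 2)))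
      = (fun y => x0 + y) '' (WC : Set (Fin n → ZMod 2)) := by
    ext x
    constructor
    · rintro ⟨hxS, hxV, hxU⟩
      refine ⟨x0 + x, ⟨V.add_mem hx0V hxV, (hker _).mpr fun i hi => ?_⟩, ?_⟩
      · rw [Pi.add_apply, (hchar x).mp hxS i hi, zmod2_addself]
      · show x0 + (x0 + x) = x
        rw [← add_assoc, pi_addself, zero_add]
    · rintro ⟨y, ⟨hyV, hyK⟩, rfl⟩
      have hS : x0 + y ∈ SatC := by
        rw [hchar]
        intro i hi
        rw [Pi.add_apply, (hker y).mp hyK i hi, add_zero]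
      exact ⟨hS, V.add_mem hx0V hyV, fun hU => hdisj _ hU hS⟩
  rw [hSet, coset_ncard, ← pow_add]
  apply Nat.pow_le_pow_right (by norm_num)
  omega


theorem stmt5 (n : ℕ) (U V : Submodule (ZMod 2) (Fin n → ZMod 2))
    (hUV : U ≤ V)
    (hcodim : Module.finrank (ZMod 2) ↥V = Module.finrank (ZMod 2) ↥U + 1)
    (F : Formula n 2)
    (hOR : F.1 = true)
    (hAND : ∀ C ∈ F.2.1, C.1 = false)
    (hlit : ∀ C ∈ F.2.1, ∀ L ∈ C.2.1, ∃ (i : Fin n) (b : Bool), L = Sum.inl (i, b))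
    (h0 : ∀ x ∈ U, ¬ Formula.Eval F x)
    (h1 : ∀ x ∈ (V : Set (Fin n → ZMod 2)) \ (U : Set (Fin n → ZMod 2)), Formula.Eval F x) :
    2 ^ (minWt ((perp U : Set (Fin n → ZMod 2)) \ (perp V : Set (Fin n → ZMod 2))) - 1) ≤
      F.2.1.ncard := by
  classical
  set m := minWt ((perp U : Set (Fin n → ZMod 2)) \ (perp V : Set (Fin n → ZMod 2))) with hmdef
  obtain ⟨gF, S⟩ := F
  simp only at hOR
  subst hOR
  have hEvalF : ∀ x, @Formula.Eval n 2 (true, S) x ↔ ∃ C ∈ S.1, Formula.Eval C x := by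
    intro x; simp [Formula.Eval]
  simp only at hAND hlit ⊢
  have hUneV : U ≠ V := fun h => by rw [h] at hcodim; omega
  obtain ⟨v1, hv1V, hv1U⟩ := SetLike.exists_of_lt (lt_of_le_of_ne hUV hUneV)
  have hS0ne : ((perp U : Set (Fin n → ZMod 2)) \ (perp V : Set (Fin n → ZMod 2))).Nonempty := by
    obtain ⟨w, hwU, hwv⟩ := dualExists U v1 hv1U
    refine ⟨w, hwU, fun h => ?_⟩
    have := h v1 hv1V
    rw [hwv] at this
    exact one_ne_zero this
  have hmem : m ∈ hammingNorm '' ((perp U : Set (Fin n → ZMod 2)) \ (perp V : Set (Fin n → ZMod 2))) := by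
    rw [hmdef]
    exact Nat.sInf_mem (hS0ne.image hammingNorm)
  obtain ⟨w0, hw0A, hw0m⟩ := hmem
  have hm1 : 1 ≤ m := by
    rcases Nat.eq_zero_or_pos m with h | h
    · exfalso
      rw [h] at hw0m
      have : w0 = 0 := hammingNorm_eq_zero.mp hw0m
      exact hw0A.2 (this ▸ (perp V).zero_mem)
    · exact h
  have hmle : ∀ w', w' ∈ ((perp U : Set (Fin n → ZMod 2)) \ (perp V : Set (Fin n → ZMod 2))) →
      m ≤ hammingNorm w' := by
    intro w' h
    rw [hmdef]
    exact Nat.sInf_le ⟨w', h, rfl⟩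
  set φ : (Fin n → ZMod 2) →ₗ[ZMod 2] ZMod 2 := ∑ i, w0 i • LinearMap.proj i with hφdef
  have hφ : ∀ x, φ x = ∑ i, w0 i * x i := by
    intro x
    simp [hφdef, LinearMap.sum_apply, LinearMap.smul_apply, LinearMap.proj_apply, smul_eq_mul]
  obtain ⟨v2, hv2V, hv2⟩ : ∃ v ∈ V, φ v = 1 := by
    by_contra h
    push_neg at h
    apply hw0A.2
    intro v hv
    have hval := h v hv
    have : φ v = 0 := by revert hval; generalize φ v = z; revert z; decide
    rw [← hφ]
    exact this
  have hUchar : ∀ x ∈ V, (x ∈ U ↔ φ x = 0) := by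
    have hUle : U ≤ LinearMap.ker φ ⊓ V := fun u hu =>
      Submodule.mem_inf.mpr ⟨LinearMap.mem_ker.mpr (by rw [hφ]; exact hw0A.1 u hu), hUV hu⟩
    have hne : LinearMap.ker φ ⊓ V ≠ V := by
      intro h
      have hmem2 : v2 ∈ LinearMap.ker φ ⊓ V := by rw [h]; exact hv2V
      have := LinearMap.mem_ker.mp hmem2.1
      rw [this] at hv2
      exact zero_ne_one hv2
    have hlt : LinearMap.ker φ ⊓ V < V := lt_of_le_of_ne inf_le_right hne
    have hfr := Submodule.finrank_lt_finrank_of_lt hlt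
    have hEq : U = LinearMap.ker φ ⊓ V := Submodule.eq_of_le_of_finrank_le hUle (by omega)
    intro x hxV
    constructor
    · intro hxU
      rw [hEq] at hxU
      exact LinearMap.mem_ker.mp hxU.1
    · intro h0x
      rw [hEq]
      exact ⟨LinearMap.mem_ker.mpr h0x, hxV⟩
  have hone : ∀ x ∈ V, x ∉ U → φ x = 1 := fun x hx hxU =>
    zmod2_ne _ (fun h => hxU ((hUchar x hx).mpr h))
  have hWU : ∀ a ∈ V, a ∉ U → ∀ b ∈ V, b ∉ U → a + b ∈ U := by
    intro a ha haU b hb hbU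
    have : φ (a + b) = 0 := by
      rw [map_add, hone a ha haU, hone b hb hbU]
      decide
    exact (hUchar _ (V.add_mem ha hb)).mpr this
  have hVUset : ((V : Set (Fin n → ZMod 2)) \ (U : Set (Fin n → ZMod 2)))
      = (fun y => v1 + y) '' (U : Set (Fin n → ZMod 2)) := by
    ext x
    constructor
    · rintro ⟨hxV, hxU⟩
      refine ⟨v1 + x, hWU v1 hv1V hv1U x hxV hxU, ?_⟩
      show v1 + (v1 + x) = x
      rw [← add_assoc, pi_addself, zero_add]
    · rintro ⟨u, huU, rfl⟩
      refine ⟨V.add_mem hv1V (hUV huU), fun h => hv1U ?_⟩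
      have := U.add_mem h huU
      rwa [add_assoc, pi_addself, add_zero] at this
  have hVUcard : ((V : Set (Fin n → ZMod 2)) \ (U : Set (Fin n → ZMod 2))).ncard
      = 2 ^ finrank (ZMod 2) U := by
    rw [hVUset, coset_ncard]
  have hfinC : (S.1 : Set (Formula n 1)).Finite := Set.toFinite _
  have hfinD : ((V : Set (Fin n → ZMod 2)) \ (U : Set (Fin n → ZMod 2))).Finite := Set.toFinite _
  have hcover : hfinD.toFinset ⊆ hfinC.toFinset.biUnion
      (fun C => (Set.toFinite ({x | Formula.Eval C x} ∩
        ((V : Set (Fin n → ZMod 2)) \ (U : Set (Fin n → ZMod 2))))).toFinset) := by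
    intro x hx
    rw [Set.Finite.mem_toFinset] at hx
    have hx1 := h1 x hx
    rw [hEvalF] at hx1
    obtain ⟨C, hCS, hCx⟩ := hx1
    rw [Finset.mem_biUnion]
    exact ⟨C, (Set.Finite.mem_toFinset _).mpr hCS, (Set.Finite.mem_toFinset _).mpr ⟨hCx, hx⟩⟩
  have hcard1 : ((V : Set (Fin n → ZMod 2)) \ (U : Set (Fin n → ZMod 2))).ncard ≤
      ∑ C ∈ hfinC.toFinset, ({x | Formula.Eval C x} ∩
        ((V : Set (Fin n → ZMod 2)) \ (U : Set (Fin n → ZMod 2)))).ncard := by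
    rw [Set.ncard_eq_toFinset_card _ hfinD]
    refine le_trans (Finset.card_le_card hcover) (le_trans Finset.card_biUnion_le ?_)
    refine Finset.sum_le_sum fun C _ => ?_
    rw [Set.ncard_eq_toFinset_card _ (Set.toFinite _)]
  have hkey : ∀ C ∈ hfinC.toFinset, 2 ^ (m - 1) * ({x | Formula.Eval C x} ∩
      ((V : Set (Fin n → ZMod 2)) \ (U : Set (Fin n → ZMod 2)))).ncard ≤
      2 ^ finrank (ZMod 2) U := by
    intro C hCF'
    have hCS : C ∈ S.1 := (Set.Finite.mem_toFinset _).mp hCF'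
    by_cases hne : ({x | Formula.Eval C x} ∩
        ((V : Set (Fin n → ZMod 2)) \ (U : Set (Fin n → ZMod 2)))).Nonempty
    · obtain ⟨x0, hx0E, hx0D⟩ := hne
      have hCfalse := hAND C hCS
      obtain ⟨g, s⟩ := C
      simp only at hCfalse
      subst hCfalse
      have hEvalC : ∀ x, @Formula.Eval n 1 (false, s) x ↔
          ∀ L ∈ s.1, Formula.Eval L x := by
        intro x; simp [Formula.Eval]
      have hx0E' : ∀ L ∈ s.1, Formula.Eval L x0 := (hEvalC x0).mp hx0E
      set T : Finset (Fin n) :=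
        Finset.univ.filter (fun i => ∃ b : Bool, Sum.inl (i, b) ∈ s.1) with hT
      have hchar : ∀ x, x ∈ {x | @Formula.Eval n 1 (false, s) x} ↔
          ∀ i ∈ T, x i = x0 i := by
        intro x
        rw [Set.mem_setOf_eq, hEvalC]
        constructor
        · intro h i hi
          rw [hT, Finset.mem_filter] at hi
          obtain ⟨-, b, hb⟩ := hi
          have h1' := h _ hb
          have h2' := hx0E' _ hb
          simp only [Formula.Eval] at h1' h2'
          rw [h1', h2']
        · intro h L hL
          obtain ⟨i, b, rfl⟩ := hlit _ hCS L hL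
          have hi : i ∈ T := by
            rw [hT, Finset.mem_filter]
            exact ⟨Finset.mem_univ i, b, hL⟩
          have h2' := hx0E' _ hL
          simp only [Formula.Eval] at h2' ⊢
          rw [h i hi, h2']
      have hdisj : ∀ x ∈ U, x ∉ {x | @Formula.Eval n 1 (false, s) x} := by
        intro x hxU hxE
        exact h0 x hxU ((hEvalF x).mpr ⟨(false, s), hCS, hxE⟩)
      exact clause_bound U V m hUV hm1 hmle hcodim hWU
        {x | @Formula.Eval n 1 (false, s) x} T x0 hx0E hx0D.1 hx0D.2 hchar hdisj
    · rw [Set.not_nonempty_iff_eq_empty.mp hne]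
      simp
  have hfinal : 2 ^ (m - 1) * 2 ^ finrank (ZMod 2) U ≤
      hfinC.toFinset.card * 2 ^ finrank (ZMod 2) U := by
    calc 2 ^ (m - 1) * 2 ^ finrank (ZMod 2) U
        = 2 ^ (m - 1) * ((V : Set (Fin n → ZMod 2)) \ (U : Set (Fin n → ZMod 2))).ncard := by
          rw [hVUcard]
      _ ≤ 2 ^ (m - 1) * ∑ C ∈ hfinC.toFinset, ({x | Formula.Eval C x} ∩
          ((V : Set (Fin n → ZMod 2)) \ (U : Set (Fin n → ZMod 2)))).ncard :=
          Nat.mul_le_mul_left _ hcard1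
      _ = ∑ C ∈ hfinC.toFinset, 2 ^ (m - 1) * ({x | Formula.Eval C x} ∩
          ((V : Set (Fin n → ZMod 2)) \ (U : Set (Fin n → ZMod 2)))).ncard := by
          rw [Finset.mul_sum]
      _ ≤ ∑ C ∈ hfinC.toFinset, 2 ^ finrank (ZMod 2) U := Finset.sum_le_sum hkey
      _ = hfinC.toFinset.card * 2 ^ finrank (ZMod 2) U := by
          rw [Finset.sum_const, smul_eq_mul]
  have h2 := Nat.le_of_mul_le_mul_right hfinal (by positivity)
  rwa [← Set.ncard_eq_toFinset_card _ hfinC] at h2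
end

section
/- Let U ⊂ V be linear subspaces of F_2^n with U of codimension 1 in V, and let G be a clause (an AND of ℓ literals on ℓ distinct variables) such that G(u) = 0 for all u ∈ U but G(v) = 1 for some v ∈ V. If, for every proper subclause G' of G obtained by dropping one literal, there exists u ∈ U with G'(u) = 1, then the projection π of V onto the ℓ coordinates of G is all of {0,1}^ℓ, the projection of U is exactly the even-weight subspace of {0,1}^ℓ, and hence the 0-1 indicator vector of the coordinates of G lies in U^⊥ \ V^⊥. -/
theorem stmt6 (n ℓ : ℕ) (hℓ : 1 ≤ ℓ) (U V : Submodule (ZMod 2) (Fin n → ZMod 2))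
    (hUV : U ≤ V)
    (hcodim : Module.finrank (ZMod 2) ↥V = Module.finrank (ZMod 2) ↥U + 1)
    (e : Fin ℓ → Fin n) (he : Function.Injective e) (p : Fin ℓ → ZMod 2)
    (hU0 : ∀ u ∈ U, ¬ ∀ j, u (e j) = p j)
    (hV1 : ∃ v ∈ V, ∀ j, v (e j) = p j)
    (hdrop : ∀ j : Fin ℓ, ∃ u ∈ U, ∀ j' ≠ j, u (e j') = p j') :
    (fun x : Fin n → ZMod 2 => fun j => x (e j)) '' (V : Set (Fin n → ZMod 2)) = Set.univ ∧
    (fun x : Fin n → ZMod 2 => fun j => x (e j)) '' (U : Set (Fin n → ZMod 2)) =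
      {q : Fin ℓ → ZMod 2 | ∑ j, q j = 0} ∧
    (fun i => if i ∈ Finset.image e Finset.univ then (1 : ZMod 2) else 0) ∈
      (perp U : Set (Fin n → ZMod 2)) \ (perp V : Set (Fin n → ZMod 2)) := by
  classical
  have two : ∀ a b : ZMod 2, a ≠ b → a = b + 1 := by decide
  choose uu huuU huup using hdrop
  obtain ⟨v, hvV, hvp⟩ := hV1
  set j0 : Fin ℓ := ⟨0, hℓ⟩ with hj0
  -- value of uu j on coordinates
  have hval : ∀ j k, uu j (e k) = p k + (if k = j then 1 else 0) := by
    intro j k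
    by_cases h : k = j
    · subst h
      simp only [if_pos rfl]
      apply two
      intro hk
      exact hU0 (uu k) (huuU k) (fun j' => by
        by_cases hj : j' = k
        · subst hj; exact hk
        · exact huup k j' hj)
    · simp [h, huup j k h]
  -- Step B: every even vector is attained by some u ∈ U
  have hB : ∀ q : Fin ℓ → ZMod 2, ∑ j, q j = 0 → ∃ u ∈ U, ∀ k, u (e k) = q k := by
    intro q hq
    refine ⟨∑ j, q j • (uu j + uu j0),
      Submodule.sum_mem _ (fun j _ => Submodule.smul_mem _ _
        (Submodule.add_mem _ (huuU j) (huuU j0))), ?_⟩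
    intro k
    have cancel : ∀ a b c : ZMod 2, (c + a) + (c + b) = a + b := by decide
    calc (∑ j, q j • (uu j + uu j0)) (e k)
        = ∑ j, q j * (uu j (e k) + uu j0 (e k)) := by
          simp [Finset.sum_apply, mul_add]
      _ = ∑ j, q j * ((if k = j then 1 else 0) + (if k = j0 then 1 else 0)) := by
          refine Finset.sum_congr rfl (fun j _ => ?_)
          rw [hval j k, hval j0 k, cancel]
      _ = (∑ j, q j * (if k = j then 1 else 0)) + (∑ j, q j) * (if k = j0 then 1 else 0) := by
          rw [Finset.sum_mul, ← Finset.sum_add_distrib]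
          exact Finset.sum_congr rfl (fun j _ => by ring)
      _ = q k := by
          rw [hq]
          simp [mul_ite, Finset.sum_ite_eq]
  -- Step A: every u ∈ U projects to an even vector
  have hA : ∀ u ∈ U, ∑ k, u (e k) = 0 := by
    intro u hu
    by_contra h
    have h1 : ∑ k, u (e k) = 1 := by
      have := two _ _ h; simpa using this
    obtain ⟨w, hwU, hw⟩ := hB (fun k => u (e k) + (if k = j0 then 1 else 0)) (by
      rw [Finset.sum_add_distrib, h1]
      simp [Finset.sum_ite_eq]
      decide)
    apply hU0 (uu j0 + w + u) (add_mem (add_mem (huuU j0) hwU) hu)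
    intro k
    have cancel2 : ∀ a b c : ZMod 2, (a + b) + (c + b) + c = a := by decide
    show uu j0 (e k) + w (e k) + u (e k) = p k
    rw [hval j0 k, hw k, cancel2]
  -- parity of p is odd
  have hp1 : ∑ k, p k = 1 := by
    have h0 := hA (uu j0) (huuU j0)
    have heq : ∑ k, (p k + (if k = j0 then 1 else 0)) = ∑ k, uu j0 (e k) :=
      Finset.sum_congr rfl (fun k _ => (hval j0 k).symm)
    rw [h0, Finset.sum_add_distrib] at heq
    simp only [Finset.sum_ite_eq', Finset.mem_univ, if_pos] at heq
    have t : ∀ a : ZMod 2, a + 1 = 0 → a = 1 := by decide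
    exact t _ heq
  refine ⟨?_, ?_, ?_, ?_⟩
  · -- projection of V is everything
    apply Set.eq_univ_iff_forall.2
    intro q
    by_cases hq : ∑ k, q k = 0
    · obtain ⟨w, hwU, hw⟩ := hB q hq
      exact ⟨w, hUV hwU, funext hw⟩
    · have hq1 : ∑ k, q k = 1 := by have := two _ _ hq; simpa using this
      obtain ⟨w, hwU, hw⟩ := hB (fun k => q k + p k) (by
        rw [Finset.sum_add_distrib, hq1, hp1]; decide)
      refine ⟨w + v, V.add_mem (hUV hwU) hvV, ?_⟩
      funext k
      show w (e k) + v (e k) = q k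
      rw [hw k, hvp k]
      have cancel4 : ∀ a b : ZMod 2, a + b + b = a := by decide
      exact cancel4 _ _
  · -- projection of U is the even subspace
    ext q
    constructor
    · rintro ⟨u, hu, rfl⟩
      exact hA u hu
    · intro hq
      obtain ⟨u, hu, hu'⟩ := hB q hq
      exact ⟨u, hu, funext hu'⟩
  · -- indicator in perp U
    intro w hw
    have key : ∑ i, (if i ∈ Finset.image e Finset.univ then (1:ZMod 2) else 0) * w i
        = ∑ j, w (e j) := by
      simp only [ite_mul, one_mul, zero_mul]
      rw [Finset.sum_ite_mem, Finset.univ_inter,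
        Finset.sum_image (fun x _ y _ h => he h)]
    rw [key]
    exact hA w hw
  · -- indicator not in perp V
    intro hmem
    have hv := hmem v hvV
    have key : ∑ i, (if i ∈ Finset.image e Finset.univ then (1:ZMod 2) else 0) * v i
        = ∑ j, v (e j) := by
      simp only [ite_mul, one_mul, zero_mul]
      rw [Finset.sum_ite_mem, Finset.univ_inter,
        Finset.sum_image (fun x _ y _ h => he h)]
    rw [key] at hv
    rw [show (fun k => v (e k)) = p from funext hvp] at hv
    rw [hp1] at hv
    exact one_ne_zero hv
end

section
/- For every d ≥ 1 and every n ≥ 1 such that n^{1/d} is an integer, the n-variable parity function is computable by a P-invariant AC^0 formula of depth d+1 with leafsize at most n·2^{d(n^{1/d}−1)}, where P is the even-weight subspace of {0,1}^n; moreover such formulas exist with either AND or OR as output gate. -/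
namespace Parity14

instance formulaFinite (n : ℕ) : ∀ d, Finite (Formula n d)
  | 0 => by show Finite ((Fin n × Bool) ⊕ Bool); infer_instance
  | d+1 => by
      have := formulaFinite n d
      show Finite (Bool × {s : Set (Formula n d) // s.Nonempty}); infer_instance

/-- extend a vector on `Fin n` to `ℕ` by zero -/
def extend {n : ℕ} (x : Fin n → ZMod 2) : ℕ → ZMod 2 := fun i => if h : i < n then x ⟨i, h⟩ else 0

lemma sum_extend {n : ℕ} (x : Fin n → ZMod 2) :
    ∑ i ∈ Finset.range n, extend x i = ∑ i, x i := by
  rw [← Fin.sum_univ_eq_sum_range (extend x) n]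
  exact Finset.sum_congr rfl fun i _ => by simp [extend, i.isLt]

lemma sum_split {M : Type*} [AddCommMonoid M] (f : ℕ → M) (K T : ℕ) :
    ∑ i ∈ Finset.range (K * T), f i
      = ∑ j ∈ Finset.range K, ∑ i ∈ Finset.range T, f (j * T + i) := by
  induction K with
  | zero => simp
  | succ K ih => rw [Nat.succ_mul, Finset.sum_range_add, ih, Finset.sum_range_succ]

lemma block_split {M : Type*} [AddCommMonoid M] (f : ℕ → M) (m t B : ℕ) :
    ∑ i ∈ Finset.range ((m+1)^(t+1)), f (B * (m+1)^(t+1) + i)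
      = ∑ j ∈ Finset.range (m+1), ∑ i ∈ Finset.range ((m+1)^t),
          f ((B*(m+1)+j) * (m+1)^t + i) := by
  rw [pow_succ', sum_split (fun i => f (B * ((m+1) * (m+1)^t) + i)) (m+1) ((m+1)^t)]
  refine Finset.sum_congr rfl fun j _ => Finset.sum_congr rfl fun i _ => ?_
  congr 1; ring

section
variable (n m : ℕ) (hn : 0 < n)

/-- merged gate node -/
def node (t : ℕ) (g : Bool) (C : Fin (m+1) → Formula n (t+1)) : Formula n (t+1) :=
  (g, ⟨⋃ j, (C j).2.1, Set.nonempty_iUnion.mpr ⟨0, (C 0).2.2⟩⟩)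

def P : (t : ℕ) → Bool → ℕ → ZMod 2 → Formula n (t+1)
  | 0, g, B, b =>
      (g, ⟨{Sum.inl (⟨B % n, Nat.mod_lt B hn⟩, decide (b = 1))}, Set.singleton_nonempty _⟩)
  | t+1, g, B, b =>
      (g, ⟨{A | ∃ ε : Fin (m+1) → ZMod 2,
              (∑ j, ε j) = (if g then b else b + (m : ZMod 2)) ∧
              A = node n m t (!g) (fun j => P t (!g) (B*(m+1)+j) (ε j))},
           ⟨_, ⟨Fin.cons (if g then b else b + (m : ZMod 2)) 0,
              by simp [Fin.sum_cons], rfl⟩⟩⟩)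

lemma P_fst (t : ℕ) (g : Bool) (B : ℕ) (b : ZMod 2) : (P n m hn t g B b).1 = g := by
  cases t <;> rfl


lemma z2cases : ∀ a : ZMod 2, a = 0 ∨ a = 1 := by decide
lemma z2ne : ∀ a b : ZMod 2, a ≠ b ↔ a = b + 1 := by decide
lemma z2nself : ∀ b : ZMod 2, b ≠ b + 1 := by decide

lemma eval_pair {n d : ℕ} (F : Formula n (d+1)) (x : Fin n → ZMod 2) :
    Formula.Eval F x ↔
      if F.1 then ∃ G ∈ F.2.1, Formula.Eval G x else ∀ G ∈ F.2.1, Formula.Eval G x :=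
  Iff.rfl

section
variable (n m : ℕ) (hn : 0 < n)

lemma sum_ones : (∑ _j : Fin (m+1), (1 : ZMod 2)) = (m : ZMod 2) + 1 := by
  rw [Finset.sum_const, Finset.card_univ, Fintype.card_fin, nsmul_eq_mul, mul_one]
  push_cast
  ring

lemma eval_P (t : ℕ) (g : Bool) (B : ℕ) (b : ZMod 2) (x : Fin n → ZMod 2)
    (hB : (B+1) * (m+1)^t ≤ n) :
    Formula.Eval (P n m hn t g B b) x ↔
      (∑ i ∈ Finset.range ((m+1)^t), extend x (B * (m+1)^t + i)) = b := by
  induction t generalizing g B b with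
  | zero =>
      have hBn : B < n := by simpa using hB
      have h1 : Formula.Eval (P n m hn 0 g B b) x ↔
          x ⟨B % n, Nat.mod_lt B hn⟩ = (if decide (b = 1) then 1 else 0) := by
        cases g
        · show (∀ G ∈ ({Sum.inl (⟨B % n, Nat.mod_lt B hn⟩, decide (b = 1))} : Set (Formula n 0)), Formula.Eval G x) ↔ _
          exact ⟨fun h => h _ rfl, fun h G hG => by
            rw [show G = Sum.inl (⟨B % n, Nat.mod_lt B hn⟩, decide (b = 1)) from hG]; exact h⟩
        · show (∃ G ∈ ({Sum.inl (⟨B % n, Nat.mod_lt B hn⟩, decide (b = 1))} : Set (Formula n 0)), Formula.Eval G x) ↔ _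
          exact ⟨fun ⟨G, hG, hE⟩ => by
            rw [show G = Sum.inl (⟨B % n, Nat.mod_lt B hn⟩, decide (b = 1)) from hG] at hE; exact hE,
            fun h => ⟨_, rfl, h⟩⟩
      rw [h1]
      simp only [pow_zero, Finset.range_one, Finset.sum_singleton, mul_one, Nat.add_zero, extend]
      rw [dif_pos hBn]
      have : (⟨B % n, Nat.mod_lt B hn⟩ : Fin n) = ⟨B, hBn⟩ := by
        apply Fin.ext; simp [Nat.mod_eq_of_lt hBn]
      rw [this]
      rcases z2cases b with hb | hb <;> subst hb <;> simp
  | succ t ih =>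
      -- sub-block bounds
      have hBj : ∀ j : Fin (m+1), (B*(m+1)+(j:ℕ)+1) * (m+1)^t ≤ n := by
        intro j
        refine le_trans ?_ hB
        rw [pow_succ']
        calc (B*(m+1)+(j:ℕ)+1) * (m+1)^t ≤ ((B+1)*(m+1)) * (m+1)^t := by
              have : B*(m+1)+(j:ℕ)+1 ≤ (B+1)*(m+1) := by
                have := j.isLt; nlinarith
              exact Nat.mul_le_mul_right _ this
          _ = (B+1) * ((m+1) * (m+1)^t) := by ring
      -- block sums
      set s : Fin (m+1) → ZMod 2 :=
        fun j => ∑ i ∈ Finset.range ((m+1)^t), extend x ((B*(m+1)+(j:ℕ)) * (m+1)^t + i) with hs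
      have htot : (∑ i ∈ Finset.range ((m+1)^(t+1)), extend x (B * (m+1)^(t+1) + i))
          = ∑ j, s j := by
        rw [block_split, ← Fin.sum_univ_eq_sum_range
          (fun j => ∑ i ∈ Finset.range ((m+1)^t), extend x ((B*(m+1)+j) * (m+1)^t + i)) (m+1)]
      have evalNode : ∀ (g' : Bool) (ε : Fin (m+1) → ZMod 2),
          Formula.Eval (node n m t g' (fun j => P n m hn t g' (B*(m+1)+(j:ℕ)) (ε j))) x ↔
            (if g' then ∃ j, s j = ε j else ∀ j, s j = ε j) := by
        intro g' ε
        rw [eval_pair]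
        show (if g' then _ else _) ↔ _
        have hch : ∀ j : Fin (m+1),
            ((if g' then (∃ G ∈ (P n m hn t g' (B*(m+1)+(j:ℕ)) (ε j)).2.1, Formula.Eval G x)
              else (∀ G ∈ (P n m hn t g' (B*(m+1)+(j:ℕ)) (ε j)).2.1, Formula.Eval G x)) ↔
              s j = ε j) := by
          intro j
          have := (eval_pair (P n m hn t g' (B*(m+1)+(j:ℕ)) (ε j)) x).symm
          rw [P_fst] at this
          rw [this]
          exact ih g' _ (ε j) (hBj j)
        cases g' with
        | true =>
            simp only [if_true, node, Set.mem_iUnion]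
            constructor
            · rintro ⟨G, ⟨j, hG⟩, hE⟩
              exact ⟨j, (hch j).mp (by simp only [if_true]; exact ⟨G, hG, hE⟩)⟩
            · rintro ⟨j, hj⟩
              obtain ⟨G, hG, hE⟩ := (by simpa only [if_true] using (hch j).mpr hj :
                ∃ G ∈ (P n m hn t true (B*(m+1)+(j:ℕ)) (ε j)).2.1, Formula.Eval G x)
              exact ⟨G, ⟨j, hG⟩, hE⟩
        | false =>
            simp only [if_false, node, Set.mem_iUnion]
            constructor
            · intro h j
              refine (hch j).mp ?_
              first
              | (intro G hG; exact h G ⟨j, hG⟩)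
              | (simp only [if_false]; intro G hG; exact h G ⟨j, hG⟩)
            · rintro h G ⟨j, hG⟩
              have h2 := (hch j).mpr (h j)
              have h3 : ∀ G ∈ (P n m hn t false (B*(m+1)+(j:ℕ)) (ε j)).2.1, Formula.Eval G x := by
                first | exact h2 | simpa only [if_false] using h2
              exact h3 G hG
      rw [htot]
      rw [eval_pair]
      cases g with
      | true =>
          show (∃ A ∈ _, Formula.Eval A x) ↔ _
          constructor
          · rintro ⟨A, ⟨ε, hε, rfl⟩, hA⟩
            have hall := (evalNode false ε).mp hA
            simp only [Bool.false_eq_true, ↓reduceIte, if_false] at hall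
            rw [show s = ε from funext hall]
            simpa using hε
          · intro h
            refine ⟨_, ⟨s, by first | exact h | simpa using h, rfl⟩, ?_⟩
            exact (evalNode false s).mpr (by first | exact fun j => rfl | simp)
      | false =>
          show (∀ A ∈ _, Formula.Eval A x) ↔ _
          constructor
          · intro h
            by_contra hne0
            have hne := (z2ne _ _).mp hne0
            set ε : Fin (m+1) → ZMod 2 := fun j => s j + 1 with hε
            have hsum : (∑ j, ε j) = b + (m : ZMod 2) := by
              rw [hε]
              rw [Finset.sum_add_distrib, sum_ones, hne]
              generalize (m : ZMod 2) = a
              generalize (b : ZMod 2) = c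
              revert a c; decide
            have := h _ ⟨ε, by first | exact hsum | simpa using hsum, rfl⟩
            have hex := (evalNode (!false) ε).mp this
            obtain ⟨j, hj⟩ : ∃ j, s j = ε j := by
              first | exact hex | simpa using hex
            exact z2nself (s j) (by simpa [hε] using hj)
          · intro h
            rintro A ⟨ε, hε, rfl⟩
            have hex : ∃ j, s j = ε j := by
              by_contra hno
              push_neg at hno
              have : ∀ j, s j = ε j + 1 := fun j => (z2ne _ _).mp (hno j)
              have hss : (∑ j, s j) = (∑ j, ε j) + ((m:ZMod 2) + 1) := by
                rw [show s = fun j => ε j + 1 from funext this,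
                  Finset.sum_add_distrib, sum_ones]
              have hε' : (∑ j, ε j) = b + (m : ZMod 2) := by
                first | exact hε | simpa using hε
              rw [h, hε'] at hss
              revert hss
              generalize (m : ZMod 2) = a
              generalize (b : ZMod 2) = c
              revert a c; decide
            exact (evalNode (!false) ε).mpr (by first | exact hex | simpa using hex)
      
end

lemma act_pair {n d : ℕ} (u : Fin n → ZMod 2) (F : Formula n (d+1)) :
    Formula.act u F = (F.1, ⟨(fun G => Formula.act u G) '' F.2.1, F.2.2.image _⟩) := rfl

lemma z2addself : ∀ a : ZMod 2, a + a = 0 := by decide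

lemma act_P (t : ℕ) (g : Bool) (B : ℕ) (b : ZMod 2) (u : Fin n → ZMod 2)
    (hB : (B+1) * (m+1)^t ≤ n) :
    Formula.act u (P n m hn t g B b)
      = P n m hn t g B (b + ∑ i ∈ Finset.range ((m+1)^t), extend u (B * (m+1)^t + i)) := by
  induction t generalizing g B b with
  | zero =>
      have hBn : B < n := by simpa using hB
      have hσ : (∑ i ∈ Finset.range ((m+1)^0), extend u (B * (m+1)^0 + i))
          = u ⟨B % n, Nat.mod_lt B hn⟩ := by
        have : (⟨B % n, Nat.mod_lt B hn⟩ : Fin n) = ⟨B, hBn⟩ := by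
          apply Fin.ext; simp [Nat.mod_eq_of_lt hBn]
        rw [this]; simp [extend, hBn]
      rw [hσ]
      have hbool : ∀ a c : ZMod 2, xor ((a == 1)) (decide (c = 1)) = decide (c + a = 1) := by
        decide
      simp only [P, Formula.act, Set.image_singleton]
      refine congrArg _ (Subtype.ext ?_)
      refine (Set.image_singleton (f := fun G : Formula n 0 => Formula.act u G)
        (a := Sum.inl (⟨B % n, Nat.mod_lt B hn⟩, decide (b = 1)))).trans ?_
      show ({Sum.inl (⟨B % n, Nat.mod_lt B hn⟩, xor (u ⟨B % n, Nat.mod_lt B hn⟩ == 1) (decide (b = 1)))} : Set (Formula n 0)) = {Sum.inl (⟨B % n, Nat.mod_lt B hn⟩, decide (b + u ⟨B % n, Nat.mod_lt B hn⟩ = 1))}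
      rw [hbool]
  | succ t ih =>
      have hBj : ∀ j : Fin (m+1), (B*(m+1)+(j:ℕ)+1) * (m+1)^t ≤ n := by
        intro j
        refine le_trans ?_ hB
        rw [pow_succ']
        calc (B*(m+1)+(j:ℕ)+1) * (m+1)^t ≤ ((B+1)*(m+1)) * (m+1)^t := by
              have : B*(m+1)+(j:ℕ)+1 ≤ (B+1)*(m+1) := by
                have := j.isLt; nlinarith
              exact Nat.mul_le_mul_right _ this
          _ = (B+1) * ((m+1) * (m+1)^t) := by ring
      set σ : Fin (m+1) → ZMod 2 :=
        fun j => ∑ i ∈ Finset.range ((m+1)^t), extend u ((B*(m+1)+(j:ℕ)) * (m+1)^t + i) with hσdef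
      have hσ : (∑ i ∈ Finset.range ((m+1)^(t+1)), extend u (B * (m+1)^(t+1) + i))
          = ∑ j, σ j := by
        rw [block_split, ← Fin.sum_univ_eq_sum_range
          (fun j => ∑ i ∈ Finset.range ((m+1)^t), extend u ((B*(m+1)+j) * (m+1)^t + i)) (m+1)]
      have childEq : ∀ (g' : Bool) (j : Fin (m+1)) (c : ZMod 2),
          (fun G => Formula.act u G) '' (P n m hn t g' (B*(m+1)+(j:ℕ)) c).2.1
            = (P n m hn t g' (B*(m+1)+(j:ℕ)) (c + σ j)).2.1 := by
        intro g' j c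
        have h1 := ih g' (B*(m+1)+(j:ℕ)) c (hBj j)
        have h2 := congrArg (fun F => F.2.1) h1
        simpa [act_pair] using h2
      have nodeEq : ∀ (g' : Bool) (ε : Fin (m+1) → ZMod 2),
          Formula.act u (node n m t g' (fun j => P n m hn t g' (B*(m+1)+(j:ℕ)) (ε j)))
            = node n m t g' (fun j => P n m hn t g' (B*(m+1)+(j:ℕ)) (ε j + σ j)) := by
        intro g' ε
        rw [act_pair]
        simp only [node]
        refine congrArg _ (Subtype.ext ?_)
        show (fun G => Formula.act u G) '' (⋃ j : Fin (m+1), (P n m hn t g' (B*(m+1)+(j:ℕ)) (ε j)).2.1)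
            = ⋃ j : Fin (m+1), (P n m hn t g' (B*(m+1)+(j:ℕ)) (ε j + σ j)).2.1
        rw [Set.image_iUnion]
        exact Set.iUnion_congr (fun j => childEq g' j (ε j))
      rw [hσ]
      rw [act_pair]
      show ((P n m hn (t+1) g B b).1, _) = _
      rw [P_fst]
      have hfst : (P n m hn (t+1) g B (b + ∑ j, σ j)) =
          ((P n m hn (t+1) g B (b + ∑ j, σ j)).1, (P n m hn (t+1) g B (b + ∑ j, σ j)).2) := rfl
      rw [hfst, P_fst]
      refine congrArg _ (Subtype.ext ?_)
      show (fun G => Formula.act u G) '' (P n m hn (t+1) g B b).2.1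
          = (P n m hn (t+1) g B (b + ∑ j, σ j)).2.1
      have hcond : ∀ c : ZMod 2,
          (if g then b + ∑ j, σ j else (b + ∑ j, σ j) + (m:ZMod 2))
            = (if g then b else b + (m:ZMod 2)) + ∑ j, σ j := by
        intro c; cases g <;> simp <;> ring
      show (fun G => Formula.act u G) ''
          {A | ∃ ε : Fin (m+1) → ZMod 2,
            (∑ j, ε j) = (if g then b else b + (m : ZMod 2)) ∧
            A = node n m t (!g) (fun j => P n m hn t (!g) (B*(m+1)+(j:ℕ)) (ε j))} = _
      ext A
      simp only [Set.mem_image, Set.mem_setOf_eq]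
      constructor
      · rintro ⟨A0, ⟨ε, hε, rfl⟩, rfl⟩
        refine ⟨fun j => ε j + σ j, ?_, ?_⟩
        · rw [Finset.sum_add_distrib, hε, hcond 0]
        · exact nodeEq (!g) ε
      · rintro ⟨ε', hε', rfl⟩
        refine ⟨node n m t (!g) (fun j => P n m hn t (!g) (B*(m+1)+(j:ℕ)) (ε' j + σ j)),
          ⟨fun j => ε' j + σ j, ?_, rfl⟩, ?_⟩
        · rw [Finset.sum_add_distrib]
          rw [hcond 0] at hε'
          rw [hε', add_assoc, z2addself, add_zero]
        · rw [nodeEq (!g) (fun j => ε' j + σ j)]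
          congr 1
          funext j
          rw [add_assoc, z2addself, add_zero]

end

section
variable (n m : ℕ) (hn : 0 < n)

lemma leafsize_pair {N d : ℕ} (F : Formula N (d+1)) :
    Formula.leafsize F = ∑ᶠ G ∈ F.2.1, Formula.leafsize G := rfl

lemma sum_biUnion_le' {α : Type*} [DecidableEq α] {ι : Type*} (s : Finset ι) (t : ι → Finset α)
    (f : α → ℕ) : ∑ x ∈ s.biUnion t, f x ≤ ∑ j ∈ s, ∑ x ∈ t j, f x := by
  classical
  induction s using Finset.induction with
  | empty => simp
  | @insert a s ha ih =>
      rw [Finset.biUnion_insert, Finset.sum_insert ha]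
      have h1 := Finset.sum_union_inter (s₁ := t a) (s₂ := s.biUnion t) (f := f)
      have h2 : ∑ x ∈ t a ∪ s.biUnion t, f x ≤ ∑ x ∈ t a, f x + ∑ x ∈ s.biUnion t, f x := by
        omega
      exact le_trans h2 (Nat.add_le_add_left ih _)

lemma finsum_union_le {α : Type*} [Finite α] (C : Fin (m+1) → Set α) (f : α → ℕ) :
    (∑ᶠ a ∈ ⋃ j, C j, f a) ≤ ∑ j, ∑ᶠ a ∈ C j, f a := by
  classical
  have hU : (⋃ j, C j).Finite := Set.toFinite _
  have hj : ∀ j, (C j).Finite := fun j => Set.toFinite _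
  rw [finsum_mem_eq_finite_toFinset_sum _ hU]
  have hset : hU.toFinset = Finset.univ.biUnion (fun j => (hj j).toFinset) := by
    ext a; simp [Set.Finite.mem_toFinset, Set.mem_iUnion]
  rw [hset]
  refine le_trans (sum_biUnion_le' _ _ _) ?_
  exact le_of_eq (Finset.sum_congr rfl fun j _ =>
    (finsum_mem_eq_finite_toFinset_sum _ (hj j)).symm)

def sumEquiv (c : ZMod 2) :
    {ε : Fin (m+1) → ZMod 2 // (∑ j, ε j) = c} ≃ (Fin m → ZMod 2) where
  toFun ε := fun j => ε.1 j.succ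
  invFun v := ⟨Fin.cons (c + ∑ j, v j) v, by
    rw [Fin.sum_cons, add_assoc, z2addself, add_zero]⟩
  left_inv ε := by
    apply Subtype.ext
    have h0 : ε.1 0 = c + ∑ j : Fin m, ε.1 j.succ := by
      have h := ε.2
      rw [Fin.sum_univ_succ] at h
      have h2 := congrArg (· + ∑ j : Fin m, ε.1 j.succ) h
      simp only [add_assoc] at h2
      rw [z2addself, add_zero] at h2
      exact h2
    dsimp only
    rw [← h0]
    exact Fin.cons_self_tail ε.1
  right_inv v := by funext j; simp [Fin.cons_succ]

lemma card_sumset (c : ZMod 2) :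
    Fintype.card {ε : Fin (m+1) → ZMod 2 // (∑ j, ε j) = c} = 2^m := by
  rw [Fintype.card_congr (sumEquiv m c), Fintype.card_fun]
  simp

lemma leafsize_P (t : ℕ) (g : Bool) (B : ℕ) (b : ZMod 2) :
    Formula.leafsize (P n m hn t g B b) ≤ (m+1)^t * 2^(t*m) := by
  induction t generalizing g B b with
  | zero =>
      rw [leafsize_pair]
      show (∑ᶠ G ∈ ({Sum.inl (⟨B % n, Nat.mod_lt B hn⟩, decide (b = 1))} : Set (Formula n 0)),
        Formula.leafsize G) ≤ _
      refine Eq.trans_le (finsum_mem_singleton (f := fun G : Formula n 0 => Formula.leafsize G)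
        (a := Sum.inl (⟨B % n, Nat.mod_lt B hn⟩, decide (b = 1)))) ?_
      show 1 ≤ _
      simp
  | succ t ih =>
      classical
      rw [leafsize_pair]
      set c : ZMod 2 := if g then b else b + (m : ZMod 2) with hc
      set nodeF : (Fin (m+1) → ZMod 2) → Formula n (t+1) :=
        fun ε => node n m t (!g) (fun j => P n m hn t (!g) (B*(m+1)+(j:ℕ)) (ε j)) with hnodeF
      set E' : Finset (Fin (m+1) → ZMod 2) := Finset.univ.filter (fun ε => (∑ j, ε j) = c)
        with hE'
      have hS : (P n m hn (t+1) g B b).2.1 = nodeF '' ↑E' := by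
        ext A
        show (∃ ε : Fin (m+1) → ZMod 2, (∑ j, ε j) = c ∧ A = nodeF ε) ↔ _
        simp only [Set.mem_image]
        constructor
        · rintro ⟨ε, h1, h2⟩
          exact ⟨ε, by simp [hE', h1], h2.symm⟩
        · rintro ⟨ε, h1, h2⟩
          refine ⟨ε, ?_, h2.symm⟩
          have h3 := h1
          simp only [Finset.mem_coe, hE', Finset.mem_filter, Finset.mem_univ, true_and] at h3
          exact h3
      have hnode : ∀ ε : Fin (m+1) → ZMod 2,
          Formula.leafsize (nodeF ε) ≤ (m+1) * ((m+1)^t * 2^(t*m)) := by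
        intro ε
        rw [leafsize_pair]
        show (∑ᶠ G ∈ ⋃ j : Fin (m+1), (P n m hn t (!g) (B*(m+1)+(j:ℕ)) (ε j)).2.1,
          Formula.leafsize G) ≤ _
        refine le_trans (finsum_union_le m _ _) ?_
        have : ∀ j : Fin (m+1),
            (∑ᶠ G ∈ (P n m hn t (!g) (B*(m+1)+(j:ℕ)) (ε j)).2.1, Formula.leafsize G)
              ≤ (m+1)^t * 2^(t*m) := by
          intro j
          rw [← leafsize_pair]
          exact ih (!g) _ (ε j)
        refine le_trans (Finset.sum_le_card_nsmul _ _ _ (fun j _ => this j)) ?_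
        simp [Finset.card_univ, mul_comm]
      have hfin : ((P n m hn (t+1) g B b).2.1).Finite := Set.toFinite _
      rw [finsum_mem_eq_finite_toFinset_sum _ hfin]
      have htf : hfin.toFinset = E'.image nodeF := by
        apply Finset.coe_injective
        rw [Set.Finite.coe_toFinset, Finset.coe_image, hS]
      rw [htf]
      refine le_trans (Finset.sum_le_card_nsmul _ _ ((m+1) * ((m+1)^t * 2^(t*m))) ?_) ?_
      · intro A hA
        obtain ⟨ε, _, rfl⟩ := Finset.mem_image.mp hA
        exact hnode ε
      · have hcard : (E'.image nodeF).card ≤ 2^m := by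
          refine le_trans (Finset.card_image_le) ?_
          have : E'.card = Fintype.card {ε : Fin (m+1) → ZMod 2 // (∑ j, ε j) = c} :=
            (Fintype.card_subtype _).symm
          rw [this, card_sumset]
        calc (E'.image nodeF).card • ((m+1) * ((m+1)^t * 2^(t*m)))
            = (E'.image nodeF).card * ((m+1) * ((m+1)^t * 2^(t*m))) := by rw [smul_eq_mul]
          _ ≤ 2^m * ((m+1) * ((m+1)^t * 2^(t*m))) := Nat.mul_le_mul_right _ hcard
          _ = (m+1)^(t+1) * 2^((t+1)*m) := by rw [Nat.succ_mul t m, pow_add, pow_succ]; ring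

end

end Parity14

open Parity14 in
theorem stmt14 (d k : ℕ) (hd : 1 ≤ d) (hk : 1 ≤ k) (n : ℕ) (hn : n = k ^ d) (g : Bool) :
    ∃ F : Formula n (d + 1),
      F.1 = g ∧
      (∀ u ∈ evenSub n, Formula.act u F = F) ∧
      (∀ x : Fin n → ZMod 2, Formula.Eval F x ↔ ∑ i, x i = 1) ∧
      Formula.leafsize F ≤ n * 2 ^ (d * (k - 1)) := by

  have hm : k = (k-1) + 1 := (Nat.succ_pred_eq_of_pos hk).symm
  set m := k - 1 with hmdef
  have hnm : n = (m+1)^d := by rw [hn, ← hm]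
  have hn0 : 0 < n := by rw [hnm]; positivity
  have hB : (0+1) * (m+1)^d ≤ n := by rw [hnm]; simp
  refine ⟨P n m hn0 d g 0 1, P_fst n m hn0 d g 0 1, ?_, ?_, ?_⟩
  · intro u hu
    have hu0 : ∑ i, u i = 0 := hu
    rw [act_P n m hn0 d g 0 1 u hB]
    have hσ : (∑ i ∈ Finset.range ((m+1)^d), extend u (0 * (m+1)^d + i)) = 0 := by
      simp only [zero_mul, zero_add]
      rw [← hnm, sum_extend, hu0]
    rw [hσ, add_zero]
  · intro x
    rw [eval_P n m hn0 d g 0 1 x hB]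
    simp only [zero_mul, zero_add]
    rw [← hnm, sum_extend]
  · refine le_trans (leafsize_P n m hn0 d g 0 1) (le_of_eq ?_)
    rw [hnm]
end

section
/- Define β(1,1) = 1, β(1,n) = ∞ for n > 1, and β(d+1, n) = min over k ≥ 1 and positive integers n_1 + ... + n_k = n of 2^{k−1}·Σ_i β(d, n_i). Then for every d ≥ 1 and n ≥ 1, β(d+1, n) ≤ n·2^{d·n^{1/d}}; and if n^{1/d} is an integer, β(d+1, n) ≤ n·2^{d(n^{1/d} − 1)}. -/
open scoped ENNReal in
noncomputable def beta : ℕ → ℕ → ℕ∞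
  | 0, _ => ⊤
  | 1, n => if n = 1 then 1 else ⊤
  | d + 2, n =>
      sInf {m : ℕ∞ | ∃ (k : ℕ) (f : Fin k → ℕ), 1 ≤ k ∧ (∀ i, 1 ≤ f i) ∧ (∑ i, f i) = n ∧
        m = 2 ^ (k - 1) * ∑ i, beta (d + 1) (f i)}

open scoped ENNReal in
lemma beta_le_of_le_pow : ∀ (d n k : ℕ), 1 ≤ n → n ≤ k ^ d →
    beta (d + 1) n ≤ (n : ℕ∞) * 2 ^ (d * (k - 1)) := by
  intro d
  induction d with
  | zero =>
    intro n k hn hk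
    simp only [pow_zero] at hk
    have : n = 1 := le_antisymm hk hn
    subst this
    simp [beta]
  | succ d ih =>
    intro n k hn hk
    have hk1 : 1 ≤ k := by
      rcases Nat.eq_zero_or_pos k with h | h
      · subst h; simp at hk; omega
      · exact h
    have hb : 1 ≤ k ^ d := Nat.one_le_pow _ _ hk1
    set b := k ^ d with hbdef
    set t := (n - 1) / b with htdef
    have htb : t * b ≤ n - 1 := Nat.div_mul_le_self _ _
    have htb' : t * b < n := lt_of_le_of_lt htb (Nat.sub_lt hn one_pos)
    have hlt : n - 1 < (t + 1) * b := (Nat.div_lt_iff_lt_mul hb).mp (Nat.lt_succ_self t)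
    have hnle : n ≤ (t + 1) * b := by
      calc n = (n - 1) + 1 := by omega
        _ ≤ (t + 1) * b := Nat.succ_le_of_lt hlt
    have hnle' : n ≤ t * b + b := hnle.trans_eq (by ring)
    have htk : t < k := by
      have hkb : k ^ (d + 1) = k * b := by rw [hbdef, pow_succ]; ring
      have h3 : n - 1 < k * b :=
        lt_of_lt_of_le (Nat.sub_lt hn one_pos) (hk.trans hkb.le)
      exact (Nat.div_lt_iff_lt_mul hb).mpr h3
    set f : Fin (t + 1) → ℕ := fun i => if (i : ℕ) < t then b else n - t * b with hf
    have hf1 : ∀ i, 1 ≤ f i := by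
      intro i; simp only [hf]; split
      · exact hb
      · exact Nat.le_sub_of_add_le (by rw [add_comm]; exact Nat.succ_le_of_lt htb')
    have hfb : ∀ i, f i ≤ b := by
      intro i; simp only [hf]; split
      · exact le_refl b
      · exact Nat.sub_le_iff_le_add.mpr (hnle'.trans_eq (by ring))
    have hsum : ∑ i, f i = n := by
      rw [Fin.sum_univ_castSucc]
      have h1 : ∀ i : Fin t, f i.castSucc = b := by
        intro i; simp [hf, i.isLt]
      have h2 : f (Fin.last t) = n - t * b := by simp [hf]
      rw [h2]
      rw [Finset.sum_congr rfl (fun i _ => h1 i), Finset.sum_const]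
      simp only [Finset.card_univ, Fintype.card_fin, smul_eq_mul]
      exact Nat.add_sub_cancel' htb'.le
    have hmem : (2 : ℕ∞) ^ ((t + 1) - 1) * ∑ i, beta (d + 1) (f i) ∈
        {m : ℕ∞ | ∃ (k : ℕ) (f : Fin k → ℕ), 1 ≤ k ∧ (∀ i, 1 ≤ f i) ∧ (∑ i, f i) = n ∧
          m = 2 ^ (k - 1) * ∑ i, beta (d + 1) (f i)} :=
      ⟨t + 1, f, Nat.succ_le_succ (Nat.zero_le _), hf1, hsum, rfl⟩
    have hstep : beta (d + 2) n ≤ 2 ^ t * ∑ i, beta (d + 1) (f i) := by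
      have h := sInf_le hmem
      rw [show beta (d + 2) n = sInf {m : ℕ∞ | ∃ (k : ℕ) (f : Fin k → ℕ), 1 ≤ k ∧
          (∀ i, 1 ≤ f i) ∧ (∑ i, f i) = n ∧
          m = 2 ^ (k - 1) * ∑ i, beta (d + 1) (f i)} from rfl]
      simpa using h
    have hsum_le : ∑ i, beta (d + 1) (f i) ≤ (n : ℕ∞) * 2 ^ (d * (k - 1)) := by
      calc ∑ i, beta (d + 1) (f i)
          ≤ ∑ i, (f i : ℕ∞) * 2 ^ (d * (k - 1)) :=
            Finset.sum_le_sum (fun i _ => ih (f i) k (hf1 i) (hfb i))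
        _ = ((∑ i, f i : ℕ) : ℕ∞) * 2 ^ (d * (k - 1)) := by
            rw [← Finset.sum_mul]; norm_cast
        _ = (n : ℕ∞) * 2 ^ (d * (k - 1)) := by rw [hsum]
    calc beta (d + 1 + 1) n ≤ 2 ^ t * ((n : ℕ∞) * 2 ^ (d * (k - 1))) :=
          le_trans hstep (mul_le_mul_right hsum_le _)
      _ ≤ 2 ^ (k - 1) * ((n : ℕ∞) * 2 ^ (d * (k - 1))) := by
          gcongr
          · exact one_le_two
          · omega
      _ = (n : ℕ∞) * 2 ^ ((d + 1) * (k - 1)) := by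
          rw [show (d + 1) * (k - 1) = (k - 1) + d * (k - 1) by ring, pow_add]
          ring

open scoped ENNReal in
theorem stmt15 (d n : ℕ) (hd : 1 ≤ d) (hn : 1 ≤ n) :
    ((beta (d + 1) n : ℕ∞) : ℝ≥0∞) ≤
      ENNReal.ofReal ((n : ℝ) * 2 ^ ((d : ℝ) * (n : ℝ) ^ ((1 : ℝ) / d))) ∧
    ∀ k : ℕ, n = k ^ d → beta (d + 1) n ≤ (n : ℕ∞) * 2 ^ (d * (k - 1)) := by
  constructor
  · set x := (n : ℝ) ^ ((1 : ℝ) / d) with hxdef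
    have hn1 : (1 : ℝ) ≤ (n : ℝ) := by exact_mod_cast hn
    have hx0 : 0 ≤ x := Real.rpow_nonneg (by positivity) _
    have hx1 : 1 ≤ x := Real.one_le_rpow hn1 (by positivity)
    set K := ⌈x⌉₊ with hKdef
    have hK1 : 1 ≤ K := Nat.one_le_ceil_iff.mpr (by linarith)
    have hxK : x ≤ (K : ℝ) := Nat.le_ceil x
    have hnK : n ≤ K ^ d := by
      have hxd : x ^ d = (n : ℝ) := by
        rw [hxdef, one_div, Real.rpow_inv_natCast_pow (by positivity) (by omega)]
      have h1 : (n : ℝ) ≤ (K : ℝ) ^ d := by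
        rw [← hxd]; exact pow_le_pow_left₀ hx0 hxK d
      exact_mod_cast h1
    have h := beta_le_of_le_pow d n K hn hnK
    have hcast : ((beta (d + 1) n : ℕ∞) : ℝ≥0∞) ≤
        (((n : ℕ∞) * 2 ^ (d * (K - 1)) : ℕ∞) : ℝ≥0∞) := ENat.toENNReal_le.mpr h
    refine le_trans hcast ?_
    have heq : (((n : ℕ∞) * 2 ^ (d * (K - 1)) : ℕ∞) : ℝ≥0∞) =
        ENNReal.ofReal ((n : ℝ) * 2 ^ (d * (K - 1))) := by
      push_cast
      rw [ENNReal.ofReal_mul (by positivity), ENNReal.ofReal_pow (by norm_num)]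
      norm_num
    rw [heq]
    apply ENNReal.ofReal_le_ofReal
    have hKx : ((d * (K - 1) : ℕ) : ℝ) ≤ (d : ℝ) * x := by
      have hc : (K : ℝ) < x + 1 := Nat.ceil_lt_add_one hx0
      have : ((K - 1 : ℕ) : ℝ) ≤ x := by
        have : ((K - 1 : ℕ) : ℝ) = (K : ℝ) - 1 := by
          have : K - 1 + 1 = K := Nat.succ_pred_eq_of_pos hK1
          push_cast [Nat.cast_sub hK1]; ring
        rw [this]; linarith
      calc ((d * (K - 1) : ℕ) : ℝ) = (d : ℝ) * ((K - 1 : ℕ) : ℝ) := by push_cast; ring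
        _ ≤ (d : ℝ) * x := by
            apply mul_le_mul_of_nonneg_left this (by positivity)
    have h2 : (2 : ℝ) ^ (d * (K - 1)) ≤ 2 ^ ((d : ℝ) * x) := by
      rw [← Real.rpow_natCast 2 (d * (K - 1))]
      exact Real.rpow_le_rpow_of_exponent_le one_le_two hKx
    exact mul_le_mul_of_nonneg_left h2 (by positivity)
  · intro k hkeq
    exact beta_le_of_le_pow d n k hn (le_of_eq hkeq)
end

section
/- Let G be a simple graph with n edges, identify {0,1}^n with spanning subgraphs of G, let Z be the cycle space of G (the F_2-span of edge sets of even subgraphs), and let Z_0 = {z ∈ Z : |z| is even}. If G is non-bipartite, then Z_0 is a codimension-1 subspace of Z, and min{|x| : x ∈ Z_0^⊥ \ Z^⊥} equals n − c, where c is the maximum number of edges in a cut of G (equivalently, n − c is the minimum number of edges whose removal makes G bipartite). -/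
noncomputable def degMap {V : Type} [Fintype V] [DecidableEq V] (G : SimpleGraph V)
    [DecidableRel G.Adj] (v : V) :
    (↥G.edgeSet → ZMod 2) →ₗ[ZMod 2] ZMod 2 :=
  ∑ e : ↥G.edgeSet, if v ∈ (e : Sym2 V) then LinearMap.proj e else 0

noncomputable def cycleSpace {V : Type} [Fintype V] [DecidableEq V] (G : SimpleGraph V)
    [DecidableRel G.Adj] : Submodule (ZMod 2) (↥G.edgeSet → ZMod 2) :=
  LinearMap.ker (LinearMap.pi (degMap G))

noncomputable def evenCycleSpace {V : Type} [Fintype V] [DecidableEq V] (G : SimpleGraph V)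
    [DecidableRel G.Adj] : Submodule (ZMod 2) (↥G.edgeSet → ZMod 2) :=
  cycleSpace G ⊓ LinearMap.ker (∑ e : ↥G.edgeSet, LinearMap.proj (R := ZMod 2)
    (φ := fun _ : ↥G.edgeSet => ZMod 2) e)

noncomputable def maxCut {V : Type} [Fintype V] [DecidableEq V] (G : SimpleGraph V)
    [DecidableRel G.Adj] : ℕ :=
  sSup {c : ℕ | ∃ f : V → Bool,
    c = (Finset.univ.filter fun e : ↥G.edgeSet => ¬ (Sym2.map f (e : Sym2 V)).IsDiag).card}


namespace Stmt18Aux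

lemma zmod2_cases (a : ZMod 2) : a = 0 ∨ a = 1 := by revert a; decide

lemma zmod2_add_self (a : ZMod 2) : a + a = 0 := by revert a; decide

lemma zmod2_eq_of_add_eq_zero {a b : ZMod 2} (h : a + b = 0) : a = b := by
  revert h; revert a b; decide

lemma zmod2_ne_zero {a : ZMod 2} (h : a ≠ 0) : a = 1 := by revert h; revert a; decide

variable {ι : Type} [Fintype ι] [DecidableEq ι]

noncomputable def dotL (x : ι → ZMod 2) : (ι → ZMod 2) →ₗ[ZMod 2] ZMod 2 :=
  ∑ i, x i • LinearMap.proj i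

lemma dotL_apply (x y : ι → ZMod 2) : dotL x y = ∑ i, x i * y i := by
  simp [dotL, LinearMap.sum_apply]

lemma dotL_single (x : ι → ZMod 2) (i : ι) : dotL x (Pi.single i 1) = x i := by
  rw [dotL_apply]
  rw [Finset.sum_eq_single i]
  · simp
  · intro j _ hj; simp [Pi.single_apply, hj]
  · simp

lemma dotL_inj {x y : ι → ZMod 2} (h : dotL x = dotL y) : x = y := by
  funext i
  rw [← dotL_single x i, ← dotL_single y i, h]

lemma hamming_one_add (d : ι → ZMod 2) :
    hammingNorm ((fun _ => (1 : ZMod 2)) + d) = Fintype.card ι - hammingNorm d := by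
  have h1 : hammingNorm ((fun _ => (1 : ZMod 2)) + d) =
      (Finset.univ.filter fun i => ¬ d i ≠ 0).card := by
    rw [hammingNorm]
    congr 1
    apply Finset.filter_congr
    intro i _
    simp only [Pi.add_apply]
    rcases zmod2_cases (d i) with h | h <;> rw [h] <;> decide
  have h2 := Finset.card_filter_add_card_filter_not
    (s := (Finset.univ : Finset ι)) (p := fun i => d i ≠ 0)
  have h3 : hammingNorm d = (Finset.univ.filter fun i => d i ≠ 0).card := rfl
  rw [h1, h3]
  rw [Finset.card_univ] at h2
  omega

lemma sInf_image_sub {K : Set ℕ} (hne : K.Nonempty) {n : ℕ} (hb : ∀ k ∈ K, k ≤ n) :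
    sInf ((fun k => n - k) '' K) = n - sSup K := by
  have hbdd : BddAbove K := ⟨n, hb⟩
  have hmem : sSup K ∈ K := Nat.sSup_mem hne hbdd
  apply le_antisymm
  · exact Nat.sInf_le ⟨sSup K, hmem, rfl⟩
  · apply le_csInf (hne.image _)
    rintro y ⟨k, hk, rfl⟩
    exact Nat.sub_le_sub_left (le_csSup hbdd hk) n

end Stmt18Aux

namespace Stmt18Aux
set_option linter.unusedSectionVars false

section Graph
variable {V : Type} [Fintype V] [DecidableEq V] (G : SimpleGraph V) [DecidableRel G.Adj]

lemma degMap_apply (v : V) (x : ↥G.edgeSet → ZMod 2) :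
    degMap G v x = ∑ e : ↥G.edgeSet, if v ∈ (e : Sym2 V) then x e else 0 := by
  simp only [degMap, LinearMap.sum_apply]
  refine Finset.sum_congr rfl fun e _ => ?_
  split <;> simp

noncomputable def indVec (c : V → ZMod 2) : ↥G.edgeSet → ZMod 2 :=
  fun e => ∑ v, if v ∈ (e : Sym2 V) then c v else 0

lemma exists_endpoints (e : ↥G.edgeSet) :
    ∃ a b, a ≠ b ∧ (e : Sym2 V) = s(a, b) := by
  obtain ⟨e, he⟩ := e
  induction e with
  | _ a b =>
    exact ⟨a, b, G.ne_of_adj (G.mem_edgeSet.1 he), rfl⟩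

lemma sum_mem_sym2 (c : V → ZMod 2) {a b : V} (hab : a ≠ b) :
    ∑ v, (if v ∈ s(a, b) then c v else 0) = c a + c b := by
  have : ∀ v : V, (if v ∈ s(a, b) then c v else 0) = (if v ∈ ({a, b} : Finset V) then c v else 0) := by
    intro v; simp [Sym2.mem_iff]
  rw [Finset.sum_congr rfl fun v _ => this v, Finset.sum_ite_mem,
    Finset.univ_inter, Finset.sum_pair hab]

lemma indVec_eq (c : V → ZMod 2) {e : ↥G.edgeSet} {a b : V} (hab : a ≠ b)
    (he : (e : Sym2 V) = s(a, b)) : indVec G c e = c a + c b := by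
  rw [indVec, he, sum_mem_sym2 _ hab]

lemma sum_smul_degMap (c : V → ZMod 2) :
    (∑ v, c v • degMap G v) = dotL (indVec G c) := by
  refine LinearMap.ext fun x => ?_
  rw [LinearMap.sum_apply, dotL_apply]
  simp only [LinearMap.smul_apply, smul_eq_mul]
  have : ∀ v, c v * degMap G v x = ∑ e : ↥G.edgeSet, (if v ∈ (e : Sym2 V) then c v else 0) * x e := by
    intro v
    rw [degMap_apply, Finset.mul_sum]
    refine Finset.sum_congr rfl fun e _ => ?_
    split <;> simp
  rw [Finset.sum_congr rfl fun v _ => this v, Finset.sum_comm]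
  refine Finset.sum_congr rfl fun e _ => ?_
  rw [indVec, Finset.sum_mul]

lemma mem_cycleSpace_iff (x : ↥G.edgeSet → ZMod 2) :
    x ∈ cycleSpace G ↔ ∀ v, degMap G v x = 0 := by
  simp [cycleSpace, LinearMap.mem_ker, LinearMap.pi_apply, funext_iff]

lemma exists_rep (φ : (↥G.edgeSet → ZMod 2) →ₗ[ZMod 2] ZMod 2)
    (h : ∀ z ∈ cycleSpace G, φ z = 0) :
    ∃ c : V → ZMod 2, (∑ v, c v • degMap G v) = φ := by
  have hker : ⨅ v, LinearMap.ker (degMap G v) ≤ LinearMap.ker φ := by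
    intro z hz
    rw [LinearMap.mem_ker]
    refine h z ?_
    rw [cycleSpace, LinearMap.ker_pi]
    exact hz
  have := mem_span_of_iInf_ker_le_ker hker
  exact (Submodule.mem_span_range_iff_exists_fun (ZMod 2)).1 this

lemma mem_perp_iff {W : Submodule (ZMod 2) (↥G.edgeSet → ZMod 2)}
    (x : ↥G.edgeSet → ZMod 2) :
    x ∈ perp W ↔ ∀ w ∈ W, dotL x w = 0 := by
  constructor
  · intro h w hw; rw [dotL_apply]; exact h w hw
  · intro h w hw; rw [← dotL_apply]; exact h w hw

lemma mem_perp_cycle_iff (d : ↥G.edgeSet → ZMod 2) :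
    d ∈ perp (cycleSpace G) ↔ ∃ c : V → ZMod 2, d = indVec G c := by
  constructor
  · intro h
    obtain ⟨c, hc⟩ := exists_rep G (dotL d) (fun z hz => (mem_perp_iff G d).1 h z hz)
    rw [sum_smul_degMap] at hc
    exact ⟨c, (dotL_inj hc).symm⟩
  · rintro ⟨c, rfl⟩
    rw [mem_perp_iff]
    intro w hw
    rw [← sum_smul_degMap]
    simp only [LinearMap.sum_apply, LinearMap.smul_apply]
    rw [mem_cycleSpace_iff] at hw
    simp [hw]


noncomputable def sigmaL : (↥G.edgeSet → ZMod 2) →ₗ[ZMod 2] ZMod 2 :=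
  ∑ e : ↥G.edgeSet, LinearMap.proj (R := ZMod 2) (φ := fun _ : ↥G.edgeSet => ZMod 2) e

lemma sigmaL_apply (x : ↥G.edgeSet → ZMod 2) : sigmaL G x = ∑ e, x e := by
  rw [sigmaL, LinearMap.sum_apply]; rfl

lemma sigmaL_eq_dotL : sigmaL G = dotL (fun _ => (1 : ZMod 2)) := by
  refine LinearMap.ext fun x => ?_
  rw [sigmaL_apply, dotL_apply]
  simp

lemma mem_evenCycleSpace_iff (x : ↥G.edgeSet → ZMod 2) :
    x ∈ evenCycleSpace G ↔ x ∈ cycleSpace G ∧ ∑ e, x e = 0 := by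
  rw [evenCycleSpace, Submodule.mem_inf, LinearMap.mem_ker, ← sigmaL, sigmaL_apply]

def b2z (b : Bool) : ZMod 2 := if b then 1 else 0

lemma b2z_z2b (c : ZMod 2) : b2z (decide (c = 1)) = c := by revert c; decide

lemma exists_odd (hnb : ¬ G.Colorable 2) :
    ∃ z ∈ cycleSpace G, ∑ e, z e = 1 := by
  by_contra h
  push_neg at h
  have h0 : ∀ z ∈ cycleSpace G, sigmaL G z = 0 := by
    intro z hz
    rw [sigmaL_apply]
    rcases zmod2_cases (∑ e, z e) with h' | h'
    · exact h'
    · exact absurd h' (h z hz)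
  obtain ⟨c, hc⟩ := exists_rep G (sigmaL G) h0
  rw [sum_smul_degMap, sigmaL_eq_dotL] at hc
  have hind : indVec G c = fun _ => (1 : ZMod 2) := dotL_inj hc
  have hcol : ∀ {a b : V}, G.Adj a b → c a ≠ c b := by
    intro a b hab
    have hne : a ≠ b := G.ne_of_adj hab
    have hmem : s(a, b) ∈ G.edgeSet := G.mem_edgeSet.2 hab
    have := indVec_eq G c hne (e := ⟨s(a, b), hmem⟩) rfl
    rw [hind] at this
    intro hcc
    rw [hcc] at this
    have : c b + c b = 0 := zmod2_add_self _
    simp_all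
  have C : G.Coloring (ZMod 2) := SimpleGraph.Coloring.mk c (fun hab => hcol hab)
  have := C.colorable
  rw [show Fintype.card (ZMod 2) = 2 from rfl] at this
  exact hnb this

lemma indVec_bool_ne_zero_iff (f : V → Bool) (e : ↥G.edgeSet) :
    indVec G (fun v => b2z (f v)) e ≠ 0 ↔ ¬ (Sym2.map f (e : Sym2 V)).IsDiag := by
  obtain ⟨a, b, hab, he⟩ := exists_endpoints G e
  rw [indVec_eq G _ hab he, he, Sym2.map_pair_eq, Sym2.mk_isDiag_iff]
  cases hfa : f a <;> cases hfb : f b <;> simp [b2z] <;> decide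

lemma hamming_indVec_bool (f : V → Bool) :
    hammingNorm (indVec G (fun v => b2z (f v))) =
      (Finset.univ.filter fun e : ↥G.edgeSet => ¬ (Sym2.map f (e : Sym2 V)).IsDiag).card := by
  rw [hammingNorm]
  congr 1
  apply Finset.filter_congr
  intro e _
  simp only [indVec_bool_ne_zero_iff]

lemma image_hamming_perp :
    hammingNorm '' (perp (cycleSpace G) : Set (↥G.edgeSet → ZMod 2)) =
      {k : ℕ | ∃ f : V → Bool,
        k = (Finset.univ.filter fun e : ↥G.edgeSet => ¬ (Sym2.map f (e : Sym2 V)).IsDiag).card} := by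
  ext k
  constructor
  · rintro ⟨d, hd, rfl⟩
    obtain ⟨c, rfl⟩ := (mem_perp_cycle_iff G d).1 hd
    refine ⟨fun v => decide (c v = 1), ?_⟩
    have : c = fun v => b2z (decide (c v = 1)) := by funext v; rw [b2z_z2b]
    conv_lhs => rw [this]
    rw [hamming_indVec_bool]
  · rintro ⟨f, rfl⟩
    refine ⟨indVec G (fun v => b2z (f v)), (mem_perp_cycle_iff G _).2 ⟨_, rfl⟩, ?_⟩
    rw [hamming_indVec_bool]


lemma one_mem_perp_even :
    (fun _ => (1 : ZMod 2)) ∈ perp (evenCycleSpace G) := by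
  rw [mem_perp_iff]
  intro w hw
  rw [dotL_apply]
  simp only [one_mul]
  exact ((mem_evenCycleSpace_iff G w).1 hw).2

lemma perp_le (W W' : Submodule (ZMod 2) (↥G.edgeSet → ZMod 2)) (h : W ≤ W') :
    perp W' ≤ perp W := fun x hx w hw => hx w (h hw)

lemma perp_diff_eq (z₀ : ↥G.edgeSet → ZMod 2) (hz₀ : z₀ ∈ cycleSpace G)
    (hz₁ : ∑ e, z₀ e = 1) :
    (perp (evenCycleSpace G) : Set (↥G.edgeSet → ZMod 2)) \
        (perp (cycleSpace G) : Set (↥G.edgeSet → ZMod 2)) =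
      (fun d => (fun _ => (1 : ZMod 2)) + d) ''
        (perp (cycleSpace G) : Set (↥G.edgeSet → ZMod 2)) := by
  have hle : perp (cycleSpace G) ≤ perp (evenCycleSpace G) :=
    perp_le G _ _ inf_le_left
  have hone : (fun _ => (1 : ZMod 2)) ∉ perp (cycleSpace G) := by
    intro h
    have := (mem_perp_iff G _).1 h z₀ hz₀
    rw [dotL_apply] at this
    simp only [one_mul] at this
    rw [hz₁] at this
    exact one_ne_zero this
  ext x
  constructor
  · rintro ⟨hxP, hxD⟩
    have key : ∀ z ∈ cycleSpace G, dotL x z = dotL x z₀ * (∑ e, z e) := by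
      intro z hz
      have hy : z + (∑ e, z e) • z₀ ∈ evenCycleSpace G := by
        rw [mem_evenCycleSpace_iff]
        refine ⟨(cycleSpace G).add_mem hz ((cycleSpace G).smul_mem _ hz₀), ?_⟩
        simp only [Pi.add_apply, Pi.smul_apply, smul_eq_mul, Finset.sum_add_distrib,
          ← Finset.mul_sum, hz₁, mul_one]
        exact zmod2_add_self _
      have h0 : dotL x (z + (∑ e, z e) • z₀) = 0 := (mem_perp_iff G x).1 hxP _ hy
      rw [map_add, map_smul, smul_eq_mul] at h0
      have := zmod2_eq_of_add_eq_zero h0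
      rw [this]; ring
    have cval := zmod2_cases (dotL x z₀)
    rcases cval with hc | hc
    · exfalso
      apply hxD
      rw [SetLike.mem_coe, mem_perp_iff]
      intro z hz
      rw [key z hz, hc, zero_mul]
    · refine ⟨(fun _ => (1 : ZMod 2)) + x, ?_, ?_⟩
      · rw [SetLike.mem_coe, mem_perp_iff]
        intro z hz
        rw [dotL_apply]
        simp only [Pi.add_apply, add_mul, one_mul, Finset.sum_add_distrib]
        rw [← dotL_apply, key z hz, hc, one_mul]
        exact zmod2_add_self _
      · funext i
        show 1 + (1 + x i) = x i
        rw [← add_assoc, show (1 : ZMod 2) + 1 = 0 by decide, zero_add]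
  · rintro ⟨d, hd, rfl⟩
    constructor
    · exact (perp (evenCycleSpace G)).add_mem (one_mem_perp_even G) (hle hd)
    · intro hmem
      apply hone
      have : (fun _ => (1 : ZMod 2)) = ((fun _ => (1 : ZMod 2)) + d) + d := by
        funext i
        simp only [Pi.add_apply]
        rw [add_assoc, zmod2_add_self, add_zero]
      rw [this]
      exact (perp (cycleSpace G)).add_mem hmem hd

end Graph
end Stmt18Aux

theorem stmt18 {V : Type} [Fintype V] [DecidableEq V] (G : SimpleGraph V)
    [DecidableRel G.Adj] (hnb : ¬ G.Colorable 2) :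
    evenCycleSpace G ≤ cycleSpace G ∧
    Module.finrank (ZMod 2) ↥(cycleSpace G) =
      Module.finrank (ZMod 2) ↥(evenCycleSpace G) + 1 ∧
    minWt ((perp (evenCycleSpace G) : Set (↥G.edgeSet → ZMod 2)) \
        (perp (cycleSpace G) : Set (↥G.edgeSet → ZMod 2))) =
      Fintype.card ↥G.edgeSet - maxCut G := by
  classical
  obtain ⟨z₀, hz₀, hz₁⟩ := Stmt18Aux.exists_odd G hnb
  refine ⟨inf_le_left, ?_, ?_⟩
  · -- finrank statement
    set f : ↥(cycleSpace G) →ₗ[ZMod 2] ZMod 2 :=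
      (Stmt18Aux.sigmaL G).comp (cycleSpace G).subtype with hf
    have hrange : LinearMap.range f = ⊤ := by
      rw [eq_top_iff]
      intro x _
      rcases Stmt18Aux.zmod2_cases x with rfl | rfl
      · exact zero_mem _
      · refine ⟨⟨z₀, hz₀⟩, ?_⟩
        rw [hf]
        simp only [LinearMap.comp_apply, Submodule.subtype_apply]
        rw [Stmt18Aux.sigmaL_apply, hz₁]
    have hrk := LinearMap.finrank_range_add_finrank_ker f
    rw [hrange] at hrk
    have htop : Module.finrank (ZMod 2) (⊤ : Submodule (ZMod 2) (ZMod 2)) = 1 := by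
      rw [finrank_top]
      exact Module.finrank_self _
    have hker : evenCycleSpace G = Submodule.map (cycleSpace G).subtype (LinearMap.ker f) := by
      rw [hf, LinearMap.ker_comp, Submodule.map_comap_subtype]
      rfl
    have h2 : Module.finrank (ZMod 2) ↥(evenCycleSpace G) =
        Module.finrank (ZMod 2) ↥(LinearMap.ker f) := by
      rw [hker]
      exact Submodule.finrank_map_subtype_eq _ _
    rw [htop] at hrk
    omega
  · -- min weight statement
    rw [minWt, Stmt18Aux.perp_diff_eq G z₀ hz₀ hz₁, Set.image_image]
    have himg : (fun d => hammingNorm ((fun _ => (1 : ZMod 2)) + d)) ''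
          (perp (cycleSpace G) : Set (↥G.edgeSet → ZMod 2)) =
        (fun k => Fintype.card ↥G.edgeSet - k) ''
          (hammingNorm '' (perp (cycleSpace G) : Set (↥G.edgeSet → ZMod 2))) := by
      rw [Set.image_image]
      apply Set.image_congr
      intro d _
      exact Stmt18Aux.hamming_one_add d
    rw [himg]
    have hne : (hammingNorm '' (perp (cycleSpace G) : Set (↥G.edgeSet → ZMod 2))).Nonempty :=
      ⟨hammingNorm (0 : ↥G.edgeSet → ZMod 2), 0, (perp (cycleSpace G)).zero_mem, rfl⟩
    have hb : ∀ k ∈ hammingNorm '' (perp (cycleSpace G) : Set (↥G.edgeSet → ZMod 2)),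
        k ≤ Fintype.card ↥G.edgeSet := by
      rintro k ⟨d, _, rfl⟩
      calc hammingNorm d ≤ Finset.univ.card := Finset.card_filter_le _ _
        _ = Fintype.card ↥G.edgeSet := Finset.card_univ
    rw [Stmt18Aux.sInf_image_sub hne hb]
    congr 1
    rw [maxCut, Stmt18Aux.image_hamming_perp G]
end

section
/- Let U ⊂ V be linear subspaces of F_2^n with U of codimension 1 in V, and suppose a depth-(d+1) formula F is an OR of subformulas forming a single orbit under the literal-swap action of U, with F(U) ≡ 0 and F(V \ U) ≡ 1. Fix G in the orbit and let S = Stab_U(G) and let T ⊆ V be any subspace with T ∩ U = S and T + U = V. Then there exists u ∈ U such that G^u(S) ≡ 0 and G^u(T \ S) ≡ 1; in particular G^u is non-constant on T. -/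
lemma zmod2_aux (a c : ZMod 2) (b : Bool) :
    (a = if (xor (c == 1) b) then 1 else 0) ↔ (a + c = if b then 1 else 0) := by
  revert a c b; decide

lemma Formula.eval_act {n : ℕ} : ∀ {d : ℕ} (G : Formula n d) (u x : Fin n → ZMod 2),
    Formula.Eval (Formula.act u G) x ↔ Formula.Eval G (x + u) := by
  intro d
  induction d with
  | zero =>
    rintro (⟨i, b⟩ | b) u x
    · simpa [Formula.act, Formula.Eval] using zmod2_aux (x i) (u i) b
    · simp [Formula.act, Formula.Eval]
  | succ d ih =>
    rintro ⟨g, s⟩ u x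
    cases g <;>
      simp [Formula.act, Formula.Eval, Set.exists_mem_image, Set.forall_mem_image, ih]

theorem stmt19 (n d : ℕ) (U V : Submodule (ZMod 2) (Fin n → ZMod 2))
    (hUV : U ≤ V)
    (hcodim : Module.finrank (ZMod 2) ↥V = Module.finrank (ZMod 2) ↥U + 1)
    (F : Formula n (d + 1)) (hOR : F.1 = true)
    (G : Formula n d) (hG : G ∈ F.2.1)
    (horbit : F.2.1 = {H : Formula n d | ∃ u ∈ U, Formula.act u G = H})
    (h0 : ∀ x ∈ U, ¬ Formula.Eval F x)
    (h1 : ∀ x ∈ (V : Set (Fin n → ZMod 2)) \ (U : Set (Fin n → ZMod 2)), Formula.Eval F x)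
    (S T : Submodule (ZMod 2) (Fin n → ZMod 2))
    (hS : (S : Set (Fin n → ZMod 2)) = {u : Fin n → ZMod 2 | u ∈ U ∧ Formula.act u G = G})
    (hTV : T ≤ V) (hinf : T ⊓ U = S) (hsup : T ⊔ U = V) :
    ∃ u ∈ U, (∀ x ∈ S, ¬ Formula.Eval (Formula.act u G) x) ∧
      (∀ x ∈ (T : Set (Fin n → ZMod 2)) \ (S : Set (Fin n → ZMod 2)),
        Formula.Eval (Formula.act u G) x) := by
  obtain ⟨g, s⟩ := F
  simp only at hOR
  subst hOR
  have hadd : ∀ y : Fin n → ZMod 2, y + y = 0 := by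
    intro y; funext i; simp [CharTwo.add_self_eq_zero]
  have hSU : S ≤ U := hinf ▸ inf_le_right
  have hST : S ≤ T := hinf ▸ inf_le_left
  -- G evaluates to 0 on U
  have hG0 : ∀ y ∈ U, ¬ Formula.Eval G y := by
    intro y hy hev
    exact h0 y hy (by simpa [Formula.Eval] using ⟨G, hG, hev⟩)
  -- dimensions
  have hdimTS : Module.finrank (ZMod 2) ↥T = Module.finrank (ZMod 2) ↥S + 1 := by
    have := Submodule.finrank_sup_add_finrank_inf_eq T U
    rw [hinf, hsup, hcodim] at this
    omega
  have hSneT : S ≠ T := by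
    intro h; rw [h] at hdimTS; omega
  have hSltT : S < T := lt_of_le_of_ne hST hSneT
  obtain ⟨v, hvT, hvS⟩ := SetLike.exists_of_lt hSltT
  have hvU : v ∉ U := by
    intro hvU
    exact hvS (hinf ▸ Submodule.mem_inf.2 ⟨hvT, hvU⟩)
  have hvV : v ∈ V := hTV hvT
  -- T = S ⊔ span {v}
  have hTeq : S ⊔ Submodule.span (ZMod 2) {v} = T := by
    apply Submodule.eq_of_le_of_finrank_le
    · exact sup_le hST (Submodule.span_le.2 (by simpa using hvT))
    · have h1 : S < S ⊔ Submodule.span (ZMod 2) {v} := by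
        refine lt_of_le_of_ne le_sup_left ?_
        intro h
        apply hvS
        rw [h]
        exact Submodule.mem_sup_right (Submodule.mem_span_singleton_self v)
      have h2 : Module.finrank (ZMod 2) ↥S < Module.finrank (ZMod 2)
          ↥(S ⊔ Submodule.span (ZMod 2) {v}) := Submodule.finrank_lt_finrank_of_lt h1
      omega
  -- get u from h1
  have hEvF := h1 v ⟨hvV, hvU⟩
  simp only [Formula.Eval, if_true] at hEvF
  obtain ⟨H, hHs, hHv⟩ := hEvF
  rw [horbit] at hHs
  obtain ⟨u, huU, rfl⟩ := hHs
  refine ⟨u, huU, ?_, ?_⟩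
  · intro x hx hev
    rw [Formula.eval_act] at hev
    exact hG0 (x + u) (U.add_mem (hSU hx) huU) hev
  · rintro x ⟨hxT, hxS⟩
    have hx' : x ∈ S ⊔ Submodule.span (ZMod 2) {v} := hTeq ▸ hxT
    obtain ⟨s', hs', y, hy, rfl⟩ := Submodule.mem_sup.1 hx'
    obtain ⟨c, rfl⟩ := Submodule.mem_span_singleton.1 hy
    have hc : c = 1 := by
      fin_cases c
      · exfalso; apply hxS; show s' + (0 : ZMod 2) • v ∈ S; rw [zero_smul, add_zero]; exact hs'
      · rfl
    subst hc
    rw [one_smul]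
    have hs'stab : Formula.act s' G = G := by
      have hmem : s' ∈ (S : Set (Fin n → ZMod 2)) := hs'
      rw [hS] at hmem
      exact hmem.2
    rw [Formula.eval_act]
    have : s' + v + u = (v + u) + s' := by abel
    rw [this, ← Formula.eval_act]
    rw [hs'stab]
    rwa [Formula.eval_act] at hHv
end
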